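/- arXiv:2404.06088 — 8 statements merged into one kernel-verified Lean document; each statement's English description precedes it below -/
import Mathlib

section
/- Let k ≥ 2 and let φ be a k-SAT formula, i.e. a conjunction of p clauses C_1, …, C_p in q Boolean variables b_1, …, b_q, where each clause C_i is a disjunction of k_i ∈ {1, …, k} literals (each literal being a variable or a negated variable) on pairwise distinct variables, and assume every variable occurs in at least one clause. Let T(φ) ⊆ {0,1}^q be the set of satisfying assignments of φ (identifying true with 1 and false with 0) and P(φ) := conv(T(φ)) ⊆ ℝ^q. Then there exist d ≥ 1 and a block configuration B in 𝔽₂^d of length q + p, of size at most 2q + p(2^k − 1) and of rank at most k·p, together with a coordinate projection π : ℝ^B → ℝ^q (a linear map sending x to the subvector formed by q of its coordinates) such that π(CTP[B]) = P(φ). Moreover, if k = 2 then π is injective on CTP[B], so that CTP[B] and P(φ) are affinely isomorphic. -/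
open scoped Classical

/-- The field `𝔽₂^d`, represented as functions `Fin d → ZMod 2`. -/
abbrev F2 (d : ℕ) : Type := Fin d → ZMod 2

/-- A cyclic transversal of a block configuration `B`. -/
def IsCyclicTransversal {d n : ℕ} (B : Fin n → Set (F2 d)) (ξ : Fin n → F2 d) : Prop :=
  (∀ i, ξ i ∈ B i) ∧ (∑ i, ξ i) = 0

/-- The incidence vector of a transversal. -/
noncomputable def incVec {d n : ℕ} (ξ : Fin n → F2 d) : Fin n → F2 d → ℝ :=
  fun i ω => if ξ i = ω then 1 else 0

/-- The cyclic transversal polytope of a block configuration. -/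
noncomputable def CTP {d n : ℕ} (B : Fin n → Set (F2 d)) : Set (Fin n → F2 d → ℝ) :=
  convexHull ℝ (incVec '' { ξ | IsCyclicTransversal B ξ })

/-- The transversal polytope of a block configuration. -/
def TP {d n : ℕ} (B : Fin n → Set (F2 d)) : Set (Fin n → F2 d → ℝ) :=
  { x | (∀ i ω, 0 ≤ x i ω) ∧ (∀ i ω, ω ∉ B i → x i ω = 0) ∧ ∀ i, (∑ ω : F2 d, x i ω) = 1 }

/-- The size of a block configuration. -/
noncomputable def blockSize {d n : ℕ} (B : Fin n → Set (F2 d)) : ℕ := ∑ i, (B i).ncard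

/-- The rank of a block configuration. -/
noncomputable def blockRank {d n : ℕ} (B : Fin n → Set (F2 d)) : ℕ :=
  Module.finrank (ZMod 2) (Submodule.span (ZMod 2) (⋃ i, B i))

/-- Two sets of real vectors are affinely isomorphic. -/
def AffIso {α β : Type*} [AddCommGroup α] [Module ℝ α] [AddCommGroup β] [Module ℝ β]
    (P : Set α) (Q : Set β) : Prop :=
  ∃ f : α →ᵃ[ℝ] β, Set.InjOn f P ∧ f '' P = Q

/-- The left-hand side of the lifted odd-set (LOS) inequality associated with `η` and `I`. -/
noncomputable def losLHS {d n : ℕ} (B : Fin n → Set (F2 d)) (η : F2 d) (I : Finset (Fin n))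
    (x : Fin n → F2 d → ℝ) : ℝ :=
  (∑ i ∈ I, ∑ ω ∈ Finset.univ.filter (fun ω : F2 d => ω ∈ B i ∧ (∑ j, η j * ω j) = 0), x i ω) +
  (∑ i ∈ Iᶜ, ∑ ω ∈ Finset.univ.filter (fun ω : F2 d => ω ∈ B i ∧ (∑ j, η j * ω j) = 1), x i ω)

namespace S0
variable {p q : ℕ}

def coord (i : Fin p) (v : Fin q) : Fin (p * q) := finProdFinEquiv (i, v)

lemma coord_inj {i i' : Fin p} {v v' : Fin q} (h : coord i v = coord i' v') :
    i = i' ∧ v = v' := by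
  have := finProdFinEquiv.injective (a₁ := (i, v)) (a₂ := (i', v')) h
  exact ⟨congrArg Prod.fst this, congrArg Prod.snd this⟩

lemma coord_surj (c : Fin (p * q)) : ∃ i v, c = coord i v := by
  obtain ⟨⟨i, v⟩, h⟩ := finProdFinEquiv.surjective c
  exact ⟨i, v, h.symm⟩

noncomputable def vvec (L : Fin p → Finset (Fin q × Bool)) (v : Fin q) : F2 (p * q) :=
  fun c => if ∃ i b, (v, b) ∈ L i ∧ c = coord i v then 1 else 0

noncomputable def wvec (L : Fin p → Finset (Fin q × Bool)) (i : Fin p) (a : Fin q → Bool) :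
    F2 (p * q) :=
  fun c => if ∃ l ∈ L i, c = coord i l.1 ∧ a l.1 = true then 1 else 0

def sat (L : Fin p → Finset (Fin q × Bool)) (i : Fin p) (a : Fin q → Bool) : Prop :=
  ∃ l ∈ L i, a l.1 = l.2

lemma vvec_apply (L : Fin p → Finset (Fin q × Bool)) (v : Fin q) (i : Fin p) (v' : Fin q) :
    vvec L v (coord i v') = if v' = v ∧ ∃ b, (v, b) ∈ L i then 1 else 0 := by
  unfold vvec
  congr 1
  simp only [eq_iff_iff]
  constructor
  · rintro ⟨i', b, hb, hc⟩
    obtain ⟨hi, hv⟩ := coord_inj hc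
    exact ⟨hv, b, hi ▸ hb⟩
  · rintro ⟨rfl, b, hb⟩
    exact ⟨i, b, hb, rfl⟩

lemma wvec_apply (L : Fin p → Finset (Fin q × Bool)) (i : Fin p) (a : Fin q → Bool)
    (i' : Fin p) (v : Fin q) :
    wvec L i a (coord i' v) = if i' = i ∧ (∃ b, (v, b) ∈ L i) ∧ a v = true then 1 else 0 := by
  unfold wvec
  congr 1
  simp only [eq_iff_iff]
  constructor
  · rintro ⟨l, hl, hc, ha⟩
    obtain ⟨hi, hv⟩ := coord_inj hc
    subst hi; subst hv
    exact ⟨rfl, ⟨l.2, by simpa using hl⟩, ha⟩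
  · rintro ⟨rfl, ⟨b, hb⟩, ha⟩
    exact ⟨(v, b), hb, rfl, ha⟩

lemma wvec_congr {L : Fin p → Finset (Fin q × Bool)} {i : Fin p} {a a' : Fin q → Bool}
    (h : ∀ l ∈ L i, a l.1 = a' l.1) : wvec L i a = wvec L i a' := by
  funext c
  unfold wvec
  congr 1
  simp only [eq_iff_iff]
  constructor <;> rintro ⟨l, hl, hc, ha⟩
  · exact ⟨l, hl, hc, (h l hl) ▸ ha⟩
  · exact ⟨l, hl, hc, (h l hl) ▸ ha⟩

lemma wvec_eval {L : Fin p → Finset (Fin q × Bool)} {i : Fin p} {l : Fin q × Bool}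
    (hl : l ∈ L i) (a : Fin q → Bool) :
    wvec L i a (coord i l.1) = if a l.1 = true then 1 else 0 := by
  rw [wvec_apply]
  have hb : ∃ b, (l.1, b) ∈ L i := ⟨l.2, by simpa using hl⟩
  simp [hb]

lemma wvec_agree {L : Fin p → Finset (Fin q × Bool)} {i : Fin p} {a a' : Fin q → Bool}
    (h : wvec L i a = wvec L i a') : ∀ l ∈ L i, a l.1 = a' l.1 := by
  intro l hl
  have := congrFun h (coord i l.1)
  rw [wvec_eval hl, wvec_eval hl] at this
  cases h1 : a l.1 <;> cases h2 : a' l.1 <;> rw [h1, h2] at this <;>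
      simp only [if_pos, if_neg, Bool.false_eq_true, Bool.true_eq_false, if_true,
        if_false] at this <;>
    first
      | rfl
      | exact absurd this (by decide)

lemma vvec_ne_zero {L : Fin p → Finset (Fin q × Bool)} {v : Fin q}
    (h : ∃ i b, (v, b) ∈ L i) : vvec L v ≠ 0 := by
  obtain ⟨i, b, hb⟩ := h
  intro hz
  have := congrFun hz (coord i v)
  rw [vvec_apply] at this
  have hb' : ∃ b, (v, b) ∈ L i := ⟨b, hb⟩
  simp [hb'] at this

variable (L : Fin p → Finset (Fin q × Bool))

noncomputable def Blk : Fin (q + p) → Set (F2 (p * q)) :=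
  Fin.addCases (fun v => ({0, vvec L v} : Set (F2 (p * q))))
    (fun i => {w | ∃ a, sat L i a ∧ w = wvec L i a})

@[simp] lemma Blk_left (v : Fin q) : Blk L (Fin.castAdd p v) = {0, vvec L v} :=
  Fin.addCases_left v

@[simp] lemma Blk_right (i : Fin p) :
    Blk L (Fin.natAdd q i) = {w | ∃ a, sat L i a ∧ w = wvec L i a} :=
  Fin.addCases_right i

noncomputable def xi (a : Fin q → Bool) : Fin (q + p) → F2 (p * q) :=
  Fin.addCases (fun v => if a v = true then vvec L v else 0) (fun i => wvec L i a)

@[simp] lemma xi_left (a : Fin q → Bool) (v : Fin q) :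
    xi L a (Fin.castAdd p v) = if a v = true then vvec L v else 0 :=
  Fin.addCases_left v

@[simp] lemma xi_right (a : Fin q → Bool) (i : Fin p) :
    xi L a (Fin.natAdd q i) = wvec L i a :=
  Fin.addCases_right i

lemma sumA (b : Fin q → Bool) (i : Fin p) (v : Fin q) :
    (∑ v' : Fin q, (if b v' = true then vvec L v' else 0) (coord i v)) =
      if (∃ bb, (v, bb) ∈ L i) ∧ b v = true then 1 else 0 := by
  rw [Finset.sum_eq_single v]
  · by_cases hb : b v = true <;> simp [hb, vvec_apply]
  · intro v' _ hne
    by_cases hb : b v' = true <;> simp [hb, vvec_apply, Ne.symm hne]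
  · simp

lemma sumB (fam : Fin p → Fin q → Bool) (i : Fin p) (v : Fin q) :
    (∑ i' : Fin p, wvec L (i' : Fin p) (fam i') (coord i v)) =
      if (∃ bb, (v, bb) ∈ L i) ∧ fam i v = true then 1 else 0 := by
  rw [Finset.sum_eq_single i]
  · rw [wvec_apply]; simp
  · intro i' _ hne
    rw [wvec_apply]
    exact if_neg (fun h => hne h.1.symm)
  · simp

lemma zmod2_add_self (x : ZMod 2) : x + x = 0 := by revert x; decide

lemma sum_xi (a : Fin q → Bool) : (∑ j, xi L a j) = 0 := by
  funext c
  obtain ⟨i, v, rfl⟩ := coord_surj c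
  rw [Finset.sum_apply, Fin.sum_univ_add]
  simp only [xi_left, xi_right]
  rw [sumA L a i v, sumB L (fun _ => a) i v, Pi.zero_apply, zmod2_add_self]

lemma xi_transversal (a : Fin q → Bool) (ha : ∀ i, sat L i a) :
    IsCyclicTransversal (Blk L) (xi L a) := by
  refine ⟨fun j => ?_, sum_xi L a⟩
  refine Fin.addCases (fun v => ?_) (fun i => ?_) j
  · rw [Blk_left, xi_left]
    by_cases hb : a v = true <;> simp [hb]
  · rw [Blk_right, xi_right]
    exact ⟨a, ha i, rfl⟩

/-- Converse: any cyclic transversal is `xi L a` for a satisfying `a`. -/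
lemma transversal_eq_xi (hnonred : ∀ v : Fin q, ∃ i, ∃ b : Bool, (v, b) ∈ L i)
    (ξ : Fin (q + p) → F2 (p * q)) (hξ : IsCyclicTransversal (Blk L) ξ) :
    ∃ a : Fin q → Bool, (∀ i, sat L i a) ∧ ξ = xi L a := by
  obtain ⟨hmem, hsum⟩ := hξ
  set a : Fin q → Bool := fun v => if ξ (Fin.castAdd p v) = vvec L v then true else false with ha
  have h1 : ∀ v, ξ (Fin.castAdd p v) = if a v = true then vvec L v else 0 := by
    intro v
    have := hmem (Fin.castAdd p v)
    rw [Blk_left, Set.mem_insert_iff, Set.mem_singleton_iff] at this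
    rcases this with h | h
    · rw [h]
      have : a v = false := by
        simp only [ha]
        rw [if_neg]
        rw [h]
        exact fun hc => vvec_ne_zero (hnonred v) hc.symm
      rw [this]; simp
    · have : a v = true := by simp only [ha]; rw [if_pos h]
      rw [this, if_pos rfl]; exact h
  have h2 : ∀ i, ∃ b, sat L i b ∧ ξ (Fin.natAdd q i) = wvec L i b := by
    intro i
    have := hmem (Fin.natAdd q i)
    rw [Blk_right] at this
    exact this
  choose fam hfam hfam2 using h2
  have key : ∀ i, ξ (Fin.natAdd q i) = wvec L i a := by
    intro i
    funext c
    obtain ⟨i', v, rfl⟩ := coord_surj c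
    rcases eq_or_ne i' i with rfl | hne
    · -- use the cyclic sum at coord i' v
      have hs := congrFun hsum (coord i' v)
      rw [Finset.sum_apply, Fin.sum_univ_add] at hs
      have e1 : (∑ v' : Fin q, ξ (Fin.castAdd p v') (coord i' v)) =
          if (∃ bb, (v, bb) ∈ L i') ∧ a v = true then 1 else 0 := by
        rw [← sumA L a i' v]
        exact Finset.sum_congr rfl (fun v' _ => by rw [h1 v'])
      have e2 : (∑ i'' : Fin p, ξ (Fin.natAdd q i'') (coord i' v)) =
          ξ (Fin.natAdd q i') (coord i' v) := by
        rw [Finset.sum_eq_single i']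
        · intro i'' _ hne
          rw [hfam2 i'', wvec_apply]
          exact if_neg (fun h => hne h.1.symm)
        · simp
      rw [e1, e2, Pi.zero_apply] at hs
      have hxy : ∀ x y : ZMod 2, x + y = 0 → y = x := by decide
      rw [hxy _ _ hs, wvec_apply]
      simp
    · rw [hfam2 i, wvec_apply, wvec_apply]
      rw [if_neg (fun h => hne h.1), if_neg (fun h => hne h.1)]
  refine ⟨a, ?_, ?_⟩
  · intro i
    obtain ⟨l, hl, hal⟩ := hfam i
    have := wvec_agree ((hfam2 i).symm.trans (key i)) l hl
    exact ⟨l, hl, this ▸ hal⟩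
  · funext j
    refine Fin.addCases (fun v => ?_) (fun i => ?_) j
    · rw [xi_left]; exact h1 v
    · rw [xi_right]; exact key i

lemma Blk_nonempty (hcard1 : ∀ i, 1 ≤ (L i).card) (j : Fin (q + p)) :
    (Blk L j).Nonempty := by
  refine Fin.addCases (fun v => ?_) (fun i => ?_) j
  · exact ⟨0, by rw [Blk_left]; exact Set.mem_insert _ _⟩
  · obtain ⟨l₀, hl₀⟩ := Finset.card_pos.mp (hcard1 i)
    refine ⟨wvec L i (fun v => if v = l₀.1 then l₀.2 else false), ?_⟩
    rw [Blk_right]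
    exact ⟨_, ⟨l₀, hl₀, by simp⟩, rfl⟩

lemma clause_ncard {k : ℕ} (i : Fin p) (hcard : (L i).card ≤ k)
    (hdistinct : ∀ l₁ ∈ L i, ∀ l₂ ∈ L i, l₁.1 = l₂.1 → l₁ = l₂) :
    (Blk L (Fin.natAdd q i)).ncard ≤ 2 ^ k - 1 := by
  classical
  set varsi : Finset (Fin q) := (L i).image Prod.fst with hvarsi
  set A₀ : Finset (Fin q) := ((L i).filter (fun l => l.2 = false)).image Prod.fst with hA₀
  set satA : Finset (Finset (Fin q)) := varsi.powerset.erase A₀ with hsatA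
  have hsub : Blk L (Fin.natAdd q i) ⊆
      (fun A : Finset (Fin q) => wvec L i (fun v => decide (v ∈ A))) '' (satA : Set (Finset (Fin q))) := by
    rw [Blk_right]
    rintro w ⟨a, ⟨l, hl, hal⟩, rfl⟩
    set A : Finset (Fin q) := ((L i).filter (fun l => a l.1 = true)).image Prod.fst with hA
    have hmemA : ∀ l' ∈ L i, (l'.1 ∈ A ↔ a l'.1 = true) := by
      intro l' hl'
      constructor
      · intro h
        obtain ⟨l'', hl'', hval⟩ := Finset.mem_image.mp h
        obtain ⟨hl''m, hl''a⟩ := Finset.mem_filter.mp hl''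
        rw [← hdistinct l'' hl''m l' hl' hval]
        exact hl''a
      · intro h
        exact Finset.mem_image.mpr ⟨l', Finset.mem_filter.mpr ⟨hl', h⟩, rfl⟩
    refine ⟨A, ?_, ?_⟩
    · rw [hsatA]
      refine Finset.mem_erase.mpr ⟨?_, Finset.mem_powerset.mpr ?_⟩
      · -- A ≠ A₀
        intro hAA
        have hmemA₀ : ∀ l' ∈ L i, (l'.1 ∈ A₀ ↔ l'.2 = false) := by
          intro l' hl'
          constructor
          · intro h
            obtain ⟨l'', hl'', hval⟩ := Finset.mem_image.mp h
            obtain ⟨hl''m, hl''a⟩ := Finset.mem_filter.mp hl''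
            rw [← hdistinct l'' hl''m l' hl' hval]
            exact hl''a
          · intro h
            exact Finset.mem_image.mpr ⟨l', Finset.mem_filter.mpr ⟨hl', h⟩, rfl⟩
        have h1 := hmemA l hl
        have h2 := hmemA₀ l hl
        rw [hAA] at h1
        cases hb : l.2 with
        | false =>
          have : l.1 ∈ A₀ := h2.mpr hb
          have : a l.1 = true := h1.mp this
          rw [hal] at this; rw [hb] at this; exact Bool.false_ne_true this
        | true =>
          have : l.1 ∈ A₀ := h1.mpr (by rw [hal, hb])
          have : l.2 = false := h2.mp this
          rw [hb] at this; exact Bool.false_ne_true this.symm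
      · intro v hv
        obtain ⟨l'', hl'', hval⟩ := Finset.mem_image.mp hv
        exact Finset.mem_image.mpr ⟨l'', (Finset.mem_filter.mp hl'').1, hval⟩
    · refine (wvec_congr ?_).symm
      intro l' hl'
      have := hmemA l' hl'
      cases hb : a l'.1 with
      | false => simpa [hb] using fun h => (Bool.false_ne_true ((this.mp h).symm.trans hb).symm)
      | true => simp [this.mpr hb]
  have hle1 : (Blk L (Fin.natAdd q i)).ncard ≤ satA.card := by
    refine le_trans (Set.ncard_le_ncard hsub ((satA : Set (Finset (Fin q))).toFinite.image _)) ?_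
    refine le_trans (Set.ncard_image_le (Finset.finite_toSet _)) ?_
    rw [Set.ncard_coe_finset]
  have hA₀mem : A₀ ∈ varsi.powerset := by
    refine Finset.mem_powerset.mpr ?_
    intro v hv
    obtain ⟨l'', hl'', hval⟩ := Finset.mem_image.mp hv
    exact Finset.mem_image.mpr ⟨l'', (Finset.mem_filter.mp hl'').1, hval⟩
  have hcardsat : satA.card = 2 ^ varsi.card - 1 := by
    rw [hsatA, Finset.card_erase_of_mem hA₀mem, Finset.card_powerset]
  refine le_trans hle1 ?_
  rw [hcardsat]
  have : varsi.card ≤ k := le_trans (Finset.card_image_le) hcard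
  exact Nat.sub_le_sub_right (Nat.pow_le_pow_right (by norm_num) this) 1

lemma size_bound {k : ℕ} (hcard : ∀ i, (L i).card ≤ k)
    (hdistinct : ∀ i, ∀ l₁ ∈ L i, ∀ l₂ ∈ L i, l₁.1 = l₂.1 → l₁ = l₂)
    (hnonred : ∀ v : Fin q, ∃ i, ∃ b : Bool, (v, b) ∈ L i) :
    blockSize (Blk L) ≤ 2 * q + p * (2 ^ k - 1) := by
  unfold blockSize
  rw [Fin.sum_univ_add]
  have h1 : (∑ v : Fin q, (Blk L (Fin.castAdd p v)).ncard) = 2 * q := by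
    rw [Finset.sum_congr rfl (fun v _ => ?_), Finset.sum_const, Finset.card_univ,
      Fintype.card_fin, smul_eq_mul, Nat.mul_comm]
    rw [Blk_left]
    exact Set.ncard_pair (Ne.symm (vvec_ne_zero (hnonred v)))
  have h2 : (∑ i : Fin p, (Blk L (Fin.natAdd q i)).ncard) ≤ p * (2 ^ k - 1) := by
    calc (∑ i : Fin p, (Blk L (Fin.natAdd q i)).ncard)
        ≤ ∑ _i : Fin p, (2 ^ k - 1) :=
          Finset.sum_le_sum (fun i _ => clause_ncard L i (hcard i) (hdistinct i))
      _ = p * (2 ^ k - 1) := by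
          rw [Finset.sum_const, Finset.card_univ, Fintype.card_fin, smul_eq_mul]
  omega

lemma mem_span_single {d : ℕ} (x : F2 d) (S : Set (F2 d))
    (h : ∀ c, x c ≠ 0 → Pi.single c (1 : ZMod 2) ∈ S) :
    x ∈ Submodule.span (ZMod 2) S := by
  have hx : x = ∑ c, Pi.single c (x c) := by
    funext c'
    rw [Finset.sum_apply]
    simp [Pi.single_apply]
  rw [hx]
  refine Submodule.sum_mem _ (fun c _ => ?_)
  by_cases hc : x c = 0
  · rw [hc]; simp
  · have : Pi.single c (x c) = (x c) • (Pi.single c (1 : ZMod 2) : F2 d) := by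
      funext c'
      rcases eq_or_ne c c' with rfl | hne
      · simp
      · simp [Pi.single_eq_of_ne (Ne.symm hne)]
    rw [this]
    exact Submodule.smul_mem _ _ (Submodule.subset_span (h c hc))

lemma rank_bound {k : ℕ} (hcard : ∀ i, (L i).card ≤ k) :
    blockRank (Blk L) ≤ k * p := by
  classical
  obtain ⟨E, hEcard, hEmem⟩ : ∃ E : Finset (F2 (p * q)), E.card ≤ p * k ∧
      ∀ i : Fin p, ∀ l ∈ L i, Pi.single (coord i l.1) (1 : ZMod 2) ∈ E := by
    refine ⟨((Finset.univ : Finset (Fin p)).sigma (fun i => L i)).image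
      (fun il => Pi.single (coord il.1 il.2.1) (1 : ZMod 2)), ?_, ?_⟩
    · refine le_trans Finset.card_image_le ?_
      rw [Finset.card_sigma]
      calc (∑ i : Fin p, (L i).card) ≤ ∑ _i : Fin p, k :=
            Finset.sum_le_sum (fun i _ => hcard i)
        _ = p * k := by rw [Finset.sum_const, Finset.card_univ, Fintype.card_fin, smul_eq_mul]
    · intro i l hl
      exact Finset.mem_image.mpr ⟨⟨i, l⟩, Finset.mem_sigma.mpr ⟨Finset.mem_univ i, hl⟩, rfl⟩
  have hspan : Submodule.span (ZMod 2) (⋃ j, Blk L j) ≤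
      Submodule.span (ZMod 2) (E : Set (F2 (p * q))) := by
    rw [Submodule.span_le]
    rintro x hx
    simp only [Set.mem_iUnion] at hx
    obtain ⟨j, hj'⟩ := hx
    have : x ∈ Submodule.span (ZMod 2) (E : Set (F2 (p * q))) := by
      revert hj'
      refine Fin.addCases (fun v hj' => ?_) (fun i hj' => ?_) j
      · rw [Blk_left, Set.mem_insert_iff, Set.mem_singleton_iff] at hj'
        rcases hj' with rfl | rfl
        · exact Submodule.zero_mem _
        · refine mem_span_single _ _ (fun c hc => ?_)
          unfold vvec at hc
          rw [ne_eq, ite_eq_right_iff] at hc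
          push_neg at hc
          obtain ⟨⟨i, b, hb, rfl⟩, -⟩ := hc
          exact Finset.mem_coe.mpr (hEmem i (v, b) hb)
      · rw [Blk_right] at hj'
        obtain ⟨a, -, rfl⟩ := hj'
        refine mem_span_single _ _ (fun c hc => ?_)
        unfold wvec at hc
        rw [ne_eq, ite_eq_right_iff] at hc
        push_neg at hc
        obtain ⟨⟨l, hl, rfl, -⟩, -⟩ := hc
        exact Finset.mem_coe.mpr (hEmem i l hl)
    exact this
  have h1 : blockRank (Blk L) ≤ Module.finrank (ZMod 2)
      (Submodule.span (ZMod 2) (E : Set (F2 (p * q)))) :=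
    Submodule.finrank_mono hspan
  have h2 := finrank_span_finset_le_card (R := ZMod 2) E
  have h4 : Set.finrank (ZMod 2) (E : Set (F2 (p * q))) =
      Module.finrank (ZMod 2) (Submodule.span (ZMod 2) (E : Set (F2 (p * q)))) := rfl
  rw [h4] at h2
  rw [Nat.mul_comm p k] at hEcard
  omega

noncomputable def projL : (Fin (q + p) → F2 (p * q) → ℝ) →ₗ[ℝ] (Fin q → ℝ) where
  toFun x := fun v => x (Fin.castAdd p v) (vvec L v)
  map_add' x y := rfl
  map_smul' c x := rfl

lemma proj_incVec (hnonred : ∀ v : Fin q, ∃ i, ∃ b : Bool, (v, b) ∈ L i) (a : Fin q → Bool) :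
    projL L (incVec (xi L a)) = fun v => if a v = true then (1 : ℝ) else 0 := by
  funext v
  show incVec (xi L a) (Fin.castAdd p v) (vvec L v) = _
  unfold incVec
  rw [xi_left]
  by_cases hb : a v = true
  · simp [hb]
  · rw [if_neg hb, if_neg hb, if_neg]
    exact fun h => vvec_ne_zero (hnonred v) h.symm

lemma proj_image (hnonred : ∀ v : Fin q, ∃ i, ∃ b : Bool, (v, b) ∈ L i) :
    projL L '' CTP (Blk L) = convexHull ℝ { y : Fin q → ℝ | ∃ a : Fin q → Bool,
      (∀ i, ∃ l ∈ L i, a l.1 = l.2) ∧ y = fun v => if a v then 1 else 0 } := by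
  unfold CTP
  rw [(projL L).image_convexHull]
  congr 1
  ext y
  constructor
  · rintro ⟨-, ⟨ξ, hξ, rfl⟩, rfl⟩
    obtain ⟨a, hsat, rfl⟩ := transversal_eq_xi L hnonred ξ hξ
    exact ⟨a, hsat, proj_incVec L hnonred a⟩
  · rintro ⟨a, hsat, rfl⟩
    exact ⟨incVec (xi L a), ⟨xi L a, xi_transversal L a hsat, rfl⟩, proj_incVec L hnonred a⟩

noncomputable def tau (l : Fin q × Bool) (y : Fin q → ℝ) : ℝ :=
  if l.2 = true then y l.1 else 1 - y l.1

def patF (i : Fin p) (ω : F2 (p * q)) : Fin q → Bool :=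
  fun v => decide (ω (coord i v) = 1)

noncomputable def DF (i : Fin p) (ω : F2 (p * q)) : Finset (Fin q × Bool) :=
  (L i).filter (fun l => ¬ (patF i ω l.1 = l.2))

noncomputable def sigmaC (i : Fin p) (ω : F2 (p * q)) (y : Fin q → ℝ) : ℝ :=
  if ω = wvec L i (patF i ω) then
    (if DF L i ω = ∅ then
       (∑ l ∈ L i, tau l y) - ((L i).card - 1 : ℝ)
     else if (DF L i ω).card = 1 then
       ∑ l ∈ DF L i ω, (1 - tau l y)
     else 0)
  else 0

noncomputable def sigma : (Fin q → ℝ) → (Fin (q + p) → F2 (p * q) → ℝ) :=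
  fun y => Fin.addCases
    (fun v ω => if ω = vvec L v then y v else if ω = 0 then 1 - y v else 0)
    (fun i ω => sigmaC L i ω y)

lemma sigma_left (y : Fin q → ℝ) (v : Fin q) (ω : F2 (p * q)) :
    sigma L y (Fin.castAdd p v) ω =
      if ω = vvec L v then y v else if ω = 0 then 1 - y v else 0 := by
  unfold sigma
  rw [Fin.addCases_left]

lemma sigma_right (y : Fin q → ℝ) (i : Fin p) (ω : F2 (p * q)) :
    sigma L y (Fin.natAdd q i) ω = sigmaC L i ω y := by
  unfold sigma
  rw [Fin.addCases_right]

lemma tau_combo (l : Fin q × Bool) {a b : ℝ} (hab : a + b = 1) (u w : Fin q → ℝ) :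
    tau l (a • u + b • w) = a * tau l u + b * tau l w := by
  unfold tau
  split_ifs <;> simp only [Pi.add_apply, Pi.smul_apply, smul_eq_mul] <;>
    linarith [hab]

lemma sigma_combo {a b : ℝ} (hab : a + b = 1) (u w : Fin q → ℝ) :
    sigma L (a • u + b • w) = a • sigma L u + b • sigma L w := by
  funext j ω
  simp only [Pi.add_apply, Pi.smul_apply, smul_eq_mul]
  refine Fin.addCases (fun v => ?_) (fun i => ?_) j
  · rw [sigma_left, sigma_left, sigma_left]
    simp only [Pi.add_apply, Pi.smul_apply, smul_eq_mul]
    split_ifs <;> linarith [hab]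
  · rw [sigma_right, sigma_right, sigma_right]
    unfold sigmaC
    split_ifs with h1 h2 h3
    · have hs : (∑ l ∈ L i, tau l (a • u + b • w)) =
          a * (∑ l ∈ L i, tau l u) + b * (∑ l ∈ L i, tau l w) := by
        rw [Finset.sum_congr rfl (fun l _ => tau_combo l hab u w), Finset.sum_add_distrib,
          ← Finset.mul_sum, ← Finset.mul_sum]
      rw [hs]
      linear_combination ((L i).card - 1 : ℝ) * hab
    · have hs : ∀ l ∈ DF L i ω,
          1 - tau l (a • u + b • w) = a * (1 - tau l u) + b * (1 - tau l w) := by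
        intro l _
        rw [tau_combo l hab u w]
        linarith [hab]
      rw [Finset.sum_congr rfl hs, Finset.sum_add_distrib, ← Finset.mul_sum, ← Finset.mul_sum]
    · ring
    · ring

lemma tau_vertex (a : Fin q → Bool) (l : Fin q × Bool) :
    tau l (fun v => if a v = true then (1 : ℝ) else 0) = if a l.1 = l.2 then 1 else 0 := by
  unfold tau
  cases hb : l.2 <;> cases hav : a l.1 <;> simp [hb, hav]

lemma bool_eq_of_ne_ne {x y c : Bool} (h1 : x ≠ c) (h2 : y ≠ c) : x = y := by
  cases x <;> cases y <;> cases c <;> simp_all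

lemma patF_wvec (hdistinct : ∀ l₁ ∈ L i, ∀ l₂ ∈ L i, l₁.1 = l₂.1 → l₁ = l₂)
    (a : Fin q → Bool) : ∀ l ∈ L i, a l.1 = patF i (wvec L i a) l.1 := by
  intro l hl
  unfold patF
  rw [wvec_eval hl]
  cases hav : a l.1 <;> simp [hav] <;> decide

lemma sigma_vertex (hk2 : ∀ i, (L i).card ≤ 2)
    (hdistinct : ∀ i, ∀ l₁ ∈ L i, ∀ l₂ ∈ L i, l₁.1 = l₂.1 → l₁ = l₂)
    (hnonred : ∀ v : Fin q, ∃ i, ∃ b : Bool, (v, b) ∈ L i)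
    (a : Fin q → Bool) (hsat : ∀ i, sat L i a) :
    sigma L (fun v => if a v = true then (1 : ℝ) else 0) = incVec (xi L a) := by
  funext j ω
  refine Fin.addCases (fun v => ?_) (fun i => ?_) j
  · -- variable block component
    simp only [sigma_left, incVec, xi_left]
    have hv0 : vvec L v ≠ 0 := vvec_ne_zero (hnonred v)
    by_cases hb : a v = true
    · simp only [if_pos hb]
      by_cases hω : ω = vvec L v
      · rw [if_pos hω, if_pos hω.symm]
      · rw [if_neg hω, if_neg (fun h : vvec L v = ω => hω h.symm)]
        split_ifs <;> norm_num
    · simp only [if_neg hb]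
      by_cases hω0 : ω = 0
      · rw [if_neg (by intro h; rw [hω0] at h; exact hv0 h.symm), if_pos hω0, if_pos hω0.symm]
        norm_num
      · rw [if_neg (fun h : (0 : F2 (p * q)) = ω => hω0 h.symm)]
        by_cases hω : ω = vvec L v
        · rw [if_pos hω]
        · rw [if_neg hω, if_neg hω0]
  · -- clause block component
    simp only [sigma_right, incVec, xi_right]
    unfold sigmaC
    set b : Fin q → Bool := patF i ω with hbdef
    -- the set of false literals of a in clause i
    set Dfa : Finset (Fin q × Bool) := (L i).filter (fun l => ¬ (a l.1 = l.2)) with hDfa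
    have hm : Dfa.card ≤ 1 := by
      obtain ⟨ls, hls, hals⟩ := hsat i
      have hsub : Dfa ⊆ (L i).erase ls := by
        intro l hl
        rw [hDfa, Finset.mem_filter] at hl
        refine Finset.mem_erase.mpr ⟨?_, hl.1⟩
        rintro rfl
        exact hl.2 hals
      have h1 := Finset.card_le_card hsub
      rw [Finset.card_erase_of_mem hls] at h1
      have := hk2 i
      omega
    by_cases hgood : ω = wvec L i b
    · rw [if_pos hgood]
      by_cases hD0 : DF L i ω = ∅
      · -- all literals of the ω-pattern are true
        rw [if_pos hD0]
        have hball : ∀ l ∈ L i, b l.1 = l.2 := by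
          intro l hl
          by_contra hne
          exact Finset.notMem_empty l (hD0 ▸ (Finset.mem_filter.mpr ⟨hl, hne⟩))
        have hsum : (∑ l ∈ L i, tau l (fun v => if a v = true then (1:ℝ) else 0)) =
            (((L i).filter (fun l => a l.1 = l.2)).card : ℝ) := by
          rw [Finset.sum_congr rfl (fun l _ => tau_vertex a l), Finset.sum_boole]
        have hsplit := Finset.card_filter_add_card_filter_not
          (s := L i) (p := fun l => a l.1 = l.2)
        by_cases hm0 : Dfa = ∅
        · have haall : ∀ l ∈ L i, a l.1 = l.2 := by
            intro l hl
            by_contra hne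
            exact Finset.notMem_empty l (hm0 ▸ (Finset.mem_filter.mpr ⟨hl, hne⟩))
          have heq : wvec L i a = ω := by
            rw [hgood]
            exact wvec_congr (fun l hl => (haall l hl).trans (hball l hl).symm)
          rw [if_pos heq, hsum]
          rw [Finset.filter_true_of_mem haall]
          have hc1 : (1:ℕ) ≤ (L i).card := by
            obtain ⟨ls, hls, -⟩ := hsat i
            exact Finset.card_pos.mpr ⟨ls, hls⟩
          have : ((L i).card : ℝ) ≥ 1 := by exact_mod_cast hc1
          ring
        · obtain ⟨lw, hlw⟩ := Finset.nonempty_iff_ne_empty.mpr hm0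
          rw [hDfa, Finset.mem_filter] at hlw
          have hne : wvec L i a ≠ ω := by
            rw [hgood]
            intro h
            exact hlw.2 ((wvec_agree h lw hlw.1).trans (hball lw hlw.1))
          rw [if_neg hne, hsum]
          have hd1 : Dfa.card = 1 := by
            have : 1 ≤ Dfa.card := Finset.card_pos.mpr ⟨lw, by
              rw [hDfa, Finset.mem_filter]; exact hlw⟩
            omega
          have : ((L i).filter (fun l => a l.1 = l.2)).card + 1 = (L i).card := by
            rw [← hd1]; exact hsplit
          have hcast : (((L i).filter (fun l => a l.1 = l.2)).card : ℝ) = ((L i).card : ℝ) - 1 := by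
            have := this
            push_cast [← this]
            ring
          rw [hcast]; ring
      · by_cases hD1 : (DF L i ω).card = 1
        · rw [if_neg hD0, if_pos hD1]
          obtain ⟨lst, hlst⟩ := Finset.card_eq_one.mp hD1
          have hlstmem : lst ∈ DF L i ω := hlst ▸ Finset.mem_singleton_self lst
          rw [DF, Finset.mem_filter] at hlstmem
          obtain ⟨hlstL, hlstb⟩ := hlstmem
          have hothers : ∀ l ∈ L i, l ≠ lst → b l.1 = l.2 := by
            intro l hl hne
            by_contra hneb
            have : l ∈ DF L i ω := by rw [DF, Finset.mem_filter]; exact ⟨hl, hneb⟩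
            rw [hlst, Finset.mem_singleton] at this
            exact hne this
          rw [hlst, Finset.sum_singleton, tau_vertex]
          by_cases hal : a lst.1 = lst.2
          · rw [if_pos hal]
            have hne : wvec L i a ≠ ω := by
              rw [hgood]
              intro h
              exact hlstb ((wvec_agree h lst hlstL).symm.trans hal)
            rw [if_neg hne]; ring
          · rw [if_neg hal]
            have heq : wvec L i a = ω := by
              rw [hgood]
              refine wvec_congr (fun l hl => ?_)
              rcases eq_or_ne l lst with rfl | hne
              · exact bool_eq_of_ne_ne hal hlstb
              · have h1 : a l.1 = l.2 := by
                  by_contra hna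
                  have hmem : l ∈ Dfa := by rw [hDfa, Finset.mem_filter]; exact ⟨hl, hna⟩
                  have hmem2 : lst ∈ Dfa := by
                    rw [hDfa, Finset.mem_filter]
                    exact ⟨hlstL, hal⟩
                  have : ({l, lst} : Finset (Fin q × Bool)) ⊆ Dfa := by
                    intro x hx
                    rw [Finset.mem_insert, Finset.mem_singleton] at hx
                    rcases hx with rfl | rfl
                    · exact hmem
                    · exact hmem2
                  have hc := Finset.card_le_card this
                  rw [Finset.card_insert_of_notMem (by
                    rw [Finset.mem_singleton]; exact hne), Finset.card_singleton] at hc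
                  omega
                rw [h1, hothers l hl hne]
            rw [if_pos heq]; ring
        · rw [if_neg hD0, if_neg hD1]
          have hne : wvec L i a ≠ ω := by
            rw [hgood]
            intro h
            have hagree := wvec_agree h
            have hsubD : DF L i ω ⊆ Dfa := by
              intro l hl
              rw [DF, Finset.mem_filter] at hl
              rw [hDfa, Finset.mem_filter]
              exact ⟨hl.1, fun ha => hl.2 ((hagree l hl.1).symm.trans ha)⟩
            have := Finset.card_le_card hsubD
            have hpos : 1 ≤ (DF L i ω).card :=
              Finset.card_pos.mpr (Finset.nonempty_iff_ne_empty.mpr hD0)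
            omega
          rw [if_neg hne]
    · rw [if_neg hgood]
      have hne : wvec L i a ≠ ω := by
        intro h
        apply hgood
        conv_lhs => rw [← h]
        rw [← h] at hbdef
        rw [hbdef]
        exact wvec_congr (patF_wvec L (hdistinct i) a)
      rw [if_neg hne]

lemma sigma_fix (hk2 : ∀ i, (L i).card ≤ 2)
    (hdistinct : ∀ i, ∀ l₁ ∈ L i, ∀ l₂ ∈ L i, l₁.1 = l₂.1 → l₁ = l₂)
    (hnonred : ∀ v : Fin q, ∃ i, ∃ b : Bool, (v, b) ∈ L i) :
    ∀ x ∈ CTP (Blk L), sigma L (projL L x) = x := by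
  have hconv : Convex ℝ {x : Fin (q + p) → F2 (p * q) → ℝ | sigma L (projL L x) = x} := by
    intro u hu w hw c e hc he hce
    simp only [Set.mem_setOf_eq] at hu hw ⊢
    rw [map_add, map_smul, map_smul, sigma_combo L hce, hu, hw]
  have hsub : incVec '' { ξ | IsCyclicTransversal (Blk L) ξ } ⊆
      {x : Fin (q + p) → F2 (p * q) → ℝ | sigma L (projL L x) = x} := by
    rintro z ⟨ξ, hξ, rfl⟩
    obtain ⟨a, hsat, rfl⟩ := transversal_eq_xi L hnonred ξ hξ
    show sigma L (projL L (incVec (xi L a))) = incVec (xi L a)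
    rw [proj_incVec L hnonred a, sigma_vertex L hk2 hdistinct hnonred a hsat]
  intro x hx
  exact convexHull_min hsub hconv hx

lemma inj_proj (hk2 : ∀ i, (L i).card ≤ 2)
    (hdistinct : ∀ i, ∀ l₁ ∈ L i, ∀ l₂ ∈ L i, l₁.1 = l₂.1 → l₁ = l₂)
    (hnonred : ∀ v : Fin q, ∃ i, ∃ b : Bool, (v, b) ∈ L i) :
    Set.InjOn (projL L) (CTP (Blk L)) := by
  intro x hx y hy hxy
  rw [← sigma_fix L hk2 hdistinct hnonred x hx, ← sigma_fix L hk2 hdistinct hnonred y hy, hxy]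

end S0

/-- Theorem on k-SAT formulas and CTPs. A `k`-SAT formula is given by `p`
clauses, each a finite set of literals `(v, b)` (with `b = true` for `b_v`, `b = false` for
`¬ b_v`), each clause having between `1` and `k` literals on pairwise distinct variables,
and every variable occurring somewhere. -/
theorem statement0 (k p q : ℕ) (hk : 2 ≤ k) (hp : 1 ≤ p) (hq : 1 ≤ q)
    (L : Fin p → Finset (Fin q × Bool))
    (hcard : ∀ i, 1 ≤ (L i).card ∧ (L i).card ≤ k)
    (hdistinct : ∀ i, ∀ l₁ ∈ L i, ∀ l₂ ∈ L i, l₁.1 = l₂.1 → l₁ = l₂)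
    (hnonred : ∀ v : Fin q, ∃ i, ∃ b : Bool, (v, b) ∈ L i) :
    ∃ d : ℕ, 1 ≤ d ∧ ∃ B : Fin (q + p) → Set (F2 d),
      (∀ i, (B i).Nonempty) ∧
      blockSize B ≤ 2 * q + p * (2 ^ k - 1) ∧
      blockRank B ≤ k * p ∧
      ∃ coords : Fin q → Fin (q + p) × F2 d, Function.Injective coords ∧
        ((fun x : Fin (q + p) → F2 d → ℝ => fun v : Fin q => x (coords v).1 (coords v).2) ''
            CTP B
          = convexHull ℝ { y : Fin q → ℝ | ∃ a : Fin q → Bool,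
              (∀ i, ∃ l ∈ L i, a l.1 = l.2) ∧ y = fun v => if a v then 1 else 0 }) ∧
        (k = 2 → Set.InjOn
            (fun x : Fin (q + p) → F2 d → ℝ => fun v : Fin q => x (coords v).1 (coords v).2)
            (CTP B)) := by
  classical
  have hcard1 : ∀ i, 1 ≤ (L i).card := fun i => (hcard i).1
  have hcardk : ∀ i, (L i).card ≤ k := fun i => (hcard i).2
  refine ⟨p * q, Nat.one_le_iff_ne_zero.mpr (Nat.mul_ne_zero (by omega) (by omega)),
    S0.Blk L, S0.Blk_nonempty L hcard1, S0.size_bound L hcardk hdistinct hnonred,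
    S0.rank_bound L hcardk, fun v => (Fin.castAdd p v, S0.vvec L v), ?_, ?_, ?_⟩
  · intro v v' h
    have h2 := congrArg (fun t : Fin (q + p) × F2 (p * q) => (t.1 : ℕ)) h
    simp only [Fin.coe_castAdd] at h2
    exact Fin.ext h2
  · exact S0.proj_image L hnonred
  · intro hk2eq
    exact S0.inj_proj L (fun i => hk2eq ▸ hcardk i) hdistinct hnonred
end

section
/- Let E be a finite set and let H_1, …, H_m (m ≥ 1) be nonempty subsets of E with E = H_1 ∪ … ∪ H_m. Call a subset S ⊆ [m] a packing if H_i ∩ H_j = ∅ for all distinct i, j ∈ S, and let PACK[H] ⊆ ℝ^m be the convex hull of the incidence vectors of all packings. Then there exist d ≥ 1 and a block configuration B in 𝔽₂^d of length m + |E| and of size 2m + |E| + Σ_{i=1}^m |H_i| such that CTP[B] and PACK[H] are affinely isomorphic. -/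
open scoped Classical
set_option linter.unusedSectionVars false
set_option maxHeartbeats 1000000

section Aux
variable {E : Type} [Fintype E] [DecidableEq E] {m : ℕ}

abbrev Idx (H : Fin m → Finset E) : Type := (i : Fin m) × {e : E // e ∈ H i}

noncomputable def dd (H : Fin m → Finset E) : ℕ := Fintype.card (Idx H)

noncomputable def ii (H : Fin m → Finset E) : Idx H ≃ Fin (dd H) := Fintype.equivFin _

noncomputable def chi (H : Fin m → Finset E) (a : Idx H) : F2 (dd H) :=
  fun j => if (ii H).symm j = a then 1 else 0

noncomputable def vv (H : Fin m → Finset E) (i : Fin m) : F2 (dd H) :=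
  fun j => if ((ii H).symm j).1 = i then 1 else 0

noncomputable def eE {E : Type} [Fintype E] : Fin (Fintype.card E) ≃ E := (Fintype.equivFin E).symm

noncomputable def Be (H : Fin m → Finset E) (e : E) : Set (F2 (dd H)) :=
  insert 0 (chi H '' {a : Idx H | (a.2 : E) = e})

def emb (E : Type) [Fintype E] {m : ℕ} (i : Fin m) : Fin (m + Fintype.card E) :=
  finSumFinEquiv (Sum.inl i)

def kemb {E : Type} [Fintype E] (m : ℕ) (k : Fin (Fintype.card E)) : Fin (m + Fintype.card E) :=
  finSumFinEquiv (Sum.inr k)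

noncomputable def BB (H : Fin m → Finset E) : Fin (m + Fintype.card E) → Set (F2 (dd H)) :=
  fun idx => Sum.elim (fun i => ({0, vv H i} : Set (F2 (dd H)))) (fun k => Be H (eE k))
    (finSumFinEquiv.symm idx)

def IsPacking (H : Fin m → Finset E) (S : Finset (Fin m)) : Prop :=
  ∀ i ∈ S, ∀ j ∈ S, i ≠ j → Disjoint (H i) (H j)

noncomputable def xiS (H : Fin m → Finset E) (S : Finset (Fin m)) :
    Fin (m + Fintype.card E) → F2 (dd H) :=
  fun idx => Sum.elim (fun i => if i ∈ S then vv H i else 0)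
    (fun k => fun j => if ((ii H).symm j).1 ∈ S ∧ (((ii H).symm j).2 : E) = eE k then 1 else 0)
    (finSumFinEquiv.symm idx)

@[simp] lemma BB_emb (H : Fin m → Finset E) (i : Fin m) : BB H (emb E i) = {0, vv H i} := by
  simp [BB, emb]

@[simp] lemma BB_kemb (H : Fin m → Finset E) (k : Fin (Fintype.card E)) :
    BB H (kemb m k) = Be H (eE k) := by
  simp [BB, kemb]

@[simp] lemma xiS_emb (H : Fin m → Finset E) (S : Finset (Fin m)) (i : Fin m) :
    xiS H S (emb E i) = if i ∈ S then vv H i else 0 := by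
  simp [xiS, emb]

@[simp] lemma xiS_kemb (H : Fin m → Finset E) (S : Finset (Fin m)) (k : Fin (Fintype.card E)) :
    xiS H S (kemb m k) =
      fun j => if ((ii H).symm j).1 ∈ S ∧ (((ii H).symm j).2 : E) = eE k then 1 else 0 := by
  simp [xiS, kemb]

lemma idx_cases {P : Fin (m + Fintype.card E) → Prop}
    (h1 : ∀ i, P (emb E i)) (h2 : ∀ k, P (kemb m k)) : ∀ idx, P idx := by
  intro idx
  have h : idx = finSumFinEquiv (finSumFinEquiv.symm idx) := (Equiv.apply_symm_apply _ _).symm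
  rw [h]
  rcases finSumFinEquiv.symm idx with i | k
  exacts [h1 i, h2 k]

lemma chi_ne_zero (H : Fin m → Finset E) (a : Idx H) : chi H a ≠ 0 := by
  intro h
  have := congrFun h (ii H a)
  simp [chi] at this

lemma chi_inj (H : Fin m → Finset E) : Function.Injective (chi H) := by
  intro a b h
  have := congrFun h (ii H a)
  simp only [chi, Equiv.symm_apply_apply, if_pos rfl] at this
  by_contra hne
  rw [if_neg hne] at this
  simp at this

lemma vv_ne_zero (H : Fin m → Finset E) (i : Fin m) (hi : (H i).Nonempty) : vv H i ≠ 0 := by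
  obtain ⟨e, he⟩ := hi
  intro h
  have := congrFun h (ii H ⟨i, ⟨e, he⟩⟩)
  simp [vv] at this

lemma Idx_ext {H : Fin m → Finset E} {a : Idx H} {i : Fin m} {e : E} {he : e ∈ H i} :
    a = ⟨i, ⟨e, he⟩⟩ ↔ a.1 = i ∧ (a.2 : E) = e := by
  constructor
  · rintro rfl; exact ⟨rfl, rfl⟩
  · rcases a with ⟨i', ⟨e', he'⟩⟩
    rintro ⟨h1, h2⟩
    dsimp at h1 h2
    subst h1; subst h2
    rfl

lemma sum_split (ξ : Fin (m + Fintype.card E) → F2 d) :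
    ∑ idx, ξ idx = (∑ i, ξ (emb E i)) + ∑ k, ξ (kemb m k) := by
  rw [← finSumFinEquiv.sum_comp, Fintype.sum_sum_type]
  rfl


lemma zmod2_add_self : ∀ x : ZMod 2, x + x = 0 := by decide
lemma zmod2_eq_of_add_eq_zero : ∀ x y : ZMod 2, x + y = 0 → y = x := by decide

lemma xiS_kemb_eq_chi {H : Fin m → Finset E} {S : Finset (Fin m)} (hS : IsPacking H S)
    {k : Fin (Fintype.card E)} {i₀ : Fin m} (hi₀S : i₀ ∈ S) (hi₀ : eE k ∈ H i₀) :
    xiS H S (kemb m k) = chi H ⟨i₀, ⟨eE k, hi₀⟩⟩ := by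
  rw [xiS_kemb]
  funext j
  have hiff : (((ii H).symm j).1 ∈ S ∧ (((ii H).symm j).2 : E) = eE k) ↔
      (ii H).symm j = ⟨i₀, ⟨eE k, hi₀⟩⟩ := by
    rw [Idx_ext]
    constructor
    · rintro ⟨h1, h2⟩
      refine ⟨?_, h2⟩
      by_contra hne
      have hd := hS _ h1 _ hi₀S hne
      have hmem : (((ii H).symm j).2 : E) ∈ H (((ii H).symm j).1) := ((ii H).symm j).2.2
      rw [h2] at hmem
      exact (Finset.disjoint_left.mp hd) hmem hi₀
    · rintro ⟨h1, h2⟩; exact ⟨h1 ▸ hi₀S, h2⟩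
  simp only [chi, hiff]

lemma xiS_kemb_eq_zero {H : Fin m → Finset E} {S : Finset (Fin m)}
    {k : Fin (Fintype.card E)} (hex : ¬ ∃ i ∈ S, eE k ∈ H i) :
    xiS H S (kemb m k) = 0 := by
  rw [xiS_kemb]
  funext j
  simp only [Pi.zero_apply]
  rw [if_neg]
  rintro ⟨h1, h2⟩
  exact hex ⟨_, h1, h2 ▸ ((ii H).symm j).2.2⟩

lemma xiS_isCT (H : Fin m → Finset E) (hH : ∀ i, (H i).Nonempty) {S : Finset (Fin m)}
    (hS : IsPacking H S) : IsCyclicTransversal (BB H) (xiS H S) := by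
  constructor
  · refine idx_cases (fun i => ?_) (fun k => ?_)
    · rw [BB_emb, xiS_emb]
      split_ifs <;> simp
    · rw [BB_kemb]
      by_cases hex : ∃ i ∈ S, eE k ∈ H i
      · obtain ⟨i₀, hi₀S, hi₀⟩ := hex
        rw [xiS_kemb_eq_chi hS hi₀S hi₀]
        exact Set.mem_insert_iff.mpr (Or.inr ⟨_, rfl, rfl⟩)
      · rw [xiS_kemb_eq_zero hex]
        exact Set.mem_insert _ _
  · rw [sum_split]
    funext j
    simp only [Pi.add_apply, Pi.zero_apply, Finset.sum_apply]
    have hA : (∑ i, xiS H S (emb E i) j) = (if ((ii H).symm j).1 ∈ S then 1 else 0) := by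
      have h1 : ∀ i, xiS H S (emb E i) j
          = if ((ii H).symm j).1 = i then (if i ∈ S then 1 else 0) else 0 := by
        intro i
        rw [xiS_emb]
        by_cases hi : i ∈ S
        · simp [hi, vv]
        · simp [hi]
      rw [Finset.sum_congr rfl (fun i _ => h1 i), Finset.sum_ite_eq]
      simp
    have hB : (∑ k, xiS H S (kemb m k) j) = (if ((ii H).symm j).1 ∈ S then 1 else 0) := by
      have h1 : ∀ k, xiS H S (kemb m k) j
          = if eE.symm (((ii H).symm j).2 : E) = k then (if ((ii H).symm j).1 ∈ S then 1 else 0)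
            else 0 := by
        intro k
        rw [xiS_kemb]
        by_cases hs : ((ii H).symm j).1 ∈ S
        · simp [hs, Equiv.symm_apply_eq]
        · simp [hs]
      rw [Finset.sum_congr rfl (fun k _ => h1 k), Finset.sum_ite_eq]
      simp
    rw [hA, hB, zmod2_add_self]

noncomputable def Sof (H : Fin m → Finset E) (ξ : Fin (m + Fintype.card E) → F2 (dd H)) :
    Finset (Fin m) := Finset.univ.filter (fun i => ξ (emb E i) = vv H i)

lemma mem_Sof {H : Fin m → Finset E} {ξ : Fin (m + Fintype.card E) → F2 (dd H)} {i : Fin m} :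
    i ∈ Sof H ξ ↔ ξ (emb E i) = vv H i := by simp [Sof]

lemma key_coord {H : Fin m → Finset E} (hH : ∀ i, (H i).Nonempty)
    {ξ : Fin (m + Fintype.card E) → F2 (dd H)}
    (hξ : IsCyclicTransversal (BB H) ξ) (a : Idx H) :
    ξ (kemb m (eE.symm (a.2 : E))) (ii H a) = if a.1 ∈ Sof H ξ then 1 else 0 := by
  obtain ⟨hmem, hsum⟩ := hξ
  rw [sum_split] at hsum
  have h0 := congrFun hsum (ii H a)
  simp only [Pi.add_apply, Pi.zero_apply, Finset.sum_apply] at h0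
  have hA : ∀ i, ξ (emb E i) (ii H a)
      = if a.1 = i then (if i ∈ Sof H ξ then 1 else 0) else 0 := by
    intro i
    have hb := hmem (emb E i)
    rw [BB_emb] at hb
    rcases hb with h | h
    · have hni : i ∉ Sof H ξ := by
        rw [mem_Sof, h]
        exact fun hh => vv_ne_zero H i (hH i) hh.symm
      simp [h, hni]
    · rw [Set.mem_singleton_iff] at h
      have hiS : i ∈ Sof H ξ := mem_Sof.mpr h
      rw [h]
      simp [vv, hiS]
  have hK : ∀ k, k ≠ eE.symm (a.2 : E) → ξ (kemb m k) (ii H a) = 0 := by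
    intro k hk
    have hb := hmem (kemb m k)
    rw [BB_kemb] at hb
    rcases hb with h | ⟨b, hb2, hbe⟩
    · rw [h]; rfl
    · rw [← hbe]
      simp only [chi, Equiv.symm_apply_apply]
      rw [if_neg]
      rintro rfl
      refine hk ?_
      have : eE.symm ((a.2 : E)) = eE.symm (eE k) := by rw [hb2]
      rw [Equiv.symm_apply_apply] at this
      exact this.symm
  rw [Finset.sum_congr rfl (fun i _ => hA i), Finset.sum_ite_eq,
    Finset.sum_eq_single_of_mem _ (Finset.mem_univ (eE.symm (a.2 : E)))
      (fun k _ hk => hK k hk)] at h0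
  simp only [Finset.mem_univ, if_true] at h0
  exact zmod2_eq_of_add_eq_zero _ _ h0

lemma Sof_packing {H : Fin m → Finset E} (hH : ∀ i, (H i).Nonempty)
    {ξ : Fin (m + Fintype.card E) → F2 (dd H)}
    (hξ : IsCyclicTransversal (BB H) ξ) : IsPacking H (Sof H ξ) := by
  intro i hi i' hi' hne
  rw [Finset.disjoint_left]
  intro e he he'
  have h1 := key_coord hH hξ ⟨i, ⟨e, he⟩⟩
  have h2 := key_coord hH hξ ⟨i', ⟨e, he'⟩⟩
  rw [if_pos hi] at h1
  rw [if_pos hi'] at h2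
  have hb := hξ.1 (kemb m (eE.symm e))
  rw [BB_kemb, Equiv.apply_symm_apply] at hb
  rcases hb with h | ⟨b, hb2, hbe⟩
  · rw [h] at h1
    simp at h1
  · rw [← hbe] at h1 h2
    simp only [chi, Equiv.symm_apply_apply] at h1 h2
    have hab1 : (⟨i, ⟨e, he⟩⟩ : Idx H) = b := by
      by_contra hc; rw [if_neg hc] at h1; exact absurd h1 (by decide)
    have hab2 : (⟨i', ⟨e, he'⟩⟩ : Idx H) = b := by
      by_contra hc; rw [if_neg hc] at h2; exact absurd h2 (by decide)
    apply hne
    have := hab1.trans hab2.symm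
    exact congrArg Sigma.fst this

lemma eq_xiS_Sof {H : Fin m → Finset E} (hH : ∀ i, (H i).Nonempty)
    {ξ : Fin (m + Fintype.card E) → F2 (dd H)}
    (hξ : IsCyclicTransversal (BB H) ξ) : ξ = xiS H (Sof H ξ) := by
  refine funext (idx_cases (fun i => ?_) (fun k => ?_))
  · rw [xiS_emb]
    by_cases hi : i ∈ Sof H ξ
    · rw [if_pos hi]; exact mem_Sof.mp hi
    · rw [if_neg hi]
      have hb := hξ.1 (emb E i)
      rw [BB_emb] at hb
      rcases hb with h | h
      · exact h
      · exact absurd (mem_Sof.mpr (Set.mem_singleton_iff.mp h)) hi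
  · rw [xiS_kemb]
    funext j
    by_cases h2 : (((ii H).symm j).2 : E) = eE k
    · have hk : k = eE.symm (((ii H).symm j).2 : E) := by
        rw [h2, Equiv.symm_apply_apply]
      have hkey := key_coord hH hξ ((ii H).symm j)
      rw [Equiv.apply_symm_apply] at hkey
      rw [hk]
      have hc : ((((ii H).symm j).1 ∈ Sof H ξ ∧
          (((ii H).symm j).2 : E) = eE (eE.symm (((ii H).symm j).2 : E)))) ↔
          (((ii H).symm j).1 ∈ Sof H ξ) := by simp
      rw [if_congr hc rfl rfl]
      exact hkey
    · rw [if_neg (fun hc => h2 hc.2)]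
      have hb := hξ.1 (kemb m k)
      rw [BB_kemb] at hb
      rcases hb with h | ⟨b, hb2, hbe⟩
      · rw [h]; rfl
      · rw [← hbe, chi]
        rw [if_neg]
        intro hc
        exact h2 (by rw [hc]; exact hb2)

noncomputable def fmap (H : Fin m → Finset E) :
    (Fin (m + Fintype.card E) → F2 (dd H) → ℝ) →ᵃ[ℝ] (Fin m → ℝ) :=
  LinearMap.toAffineMap
    { toFun := fun x => fun i => x (emb E i) (vv H i)
      map_add' := fun x y => rfl
      map_smul' := fun c x => rfl }

@[simp] lemma fmap_apply (H : Fin m → Finset E) (x : Fin (m + Fintype.card E) → F2 (dd H) → ℝ)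
    (i : Fin m) : fmap H x i = x (emb E i) (vv H i) := rfl

noncomputable def gFun (H : Fin m → Finset E) (y : Fin m → ℝ) :
    Fin (m + Fintype.card E) → F2 (dd H) → ℝ := fun idx ω =>
  Sum.elim
    (fun i => (if ω = vv H i then y i else 0) + (if ω = 0 then 1 - y i else 0))
    (fun k => (∑ a : Idx H, if (a.2 : E) = eE k ∧ ω = chi H a then y a.1 else 0) +
      (if ω = 0 then 1 - ∑ a : Idx H, if (a.2 : E) = eE k then y a.1 else 0 else 0))
    (finSumFinEquiv.symm idx)

noncomputable def gLinFun (H : Fin m → Finset E) (y : Fin m → ℝ) :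
    Fin (m + Fintype.card E) → F2 (dd H) → ℝ := fun idx ω =>
  Sum.elim
    (fun i => (if ω = vv H i then y i else 0) + (if ω = 0 then - y i else 0))
    (fun k => (∑ a : Idx H, if (a.2 : E) = eE k ∧ ω = chi H a then y a.1 else 0) +
      (if ω = 0 then - ∑ a : Idx H, if (a.2 : E) = eE k then y a.1 else 0 else 0))
    (finSumFinEquiv.symm idx)

noncomputable def gLin (H : Fin m → Finset E) :
    (Fin m → ℝ) →ₗ[ℝ] (Fin (m + Fintype.card E) → F2 (dd H) → ℝ) where
  toFun := gLinFun H
  map_add' y z := by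
    funext idx ω
    simp only [gLinFun, Pi.add_apply]
    rcases finSumFinEquiv.symm idx with i | k
    · simp only [Sum.elim_inl, Pi.add_apply]
      split_ifs <;> ring
    · simp only [Sum.elim_inr, Pi.add_apply]
      have h1 : (∑ a : Idx H, if (a.2 : E) = eE k ∧ ω = chi H a then y a.1 + z a.1 else 0)
          = (∑ a : Idx H, if (a.2 : E) = eE k ∧ ω = chi H a then y a.1 else 0)
          + (∑ a : Idx H, if (a.2 : E) = eE k ∧ ω = chi H a then z a.1 else 0) := by
        rw [← Finset.sum_add_distrib]
        exact Finset.sum_congr rfl fun a _ => by split_ifs <;> simp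
      have h2 : (∑ a : Idx H, if (a.2 : E) = eE k then y a.1 + z a.1 else 0)
          = (∑ a : Idx H, if (a.2 : E) = eE k then y a.1 else 0)
          + (∑ a : Idx H, if (a.2 : E) = eE k then z a.1 else 0) := by
        rw [← Finset.sum_add_distrib]
        exact Finset.sum_congr rfl fun a _ => by split_ifs <;> simp
      rw [h1, h2]
      split_ifs <;> ring
  map_smul' c y := by
    funext idx ω
    simp only [gLinFun, Pi.smul_apply, smul_eq_mul, RingHom.id_apply]
    rcases finSumFinEquiv.symm idx with i | k
    · simp only [Sum.elim_inl, Pi.smul_apply, smul_eq_mul]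
      split_ifs <;> ring
    · simp only [Sum.elim_inr, Pi.smul_apply, smul_eq_mul]
      have h1 : (∑ a : Idx H, if (a.2 : E) = eE k ∧ ω = chi H a then c * y a.1 else 0)
          = c * (∑ a : Idx H, if (a.2 : E) = eE k ∧ ω = chi H a then y a.1 else 0) := by
        rw [Finset.mul_sum]
        exact Finset.sum_congr rfl fun a _ => by split_ifs <;> ring
      have h2 : (∑ a : Idx H, if (a.2 : E) = eE k then c * y a.1 else 0)
          = c * (∑ a : Idx H, if (a.2 : E) = eE k then y a.1 else 0) := by
        rw [Finset.mul_sum]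
        exact Finset.sum_congr rfl fun a _ => by split_ifs <;> ring
      rw [h1, h2]
      split_ifs <;> ring

noncomputable def gmap (H : Fin m → Finset E) :
    (Fin m → ℝ) →ᵃ[ℝ] (Fin (m + Fintype.card E) → F2 (dd H) → ℝ) :=
  AffineMap.mk' (gFun H) (gLin H) 0 (by
    intro p
    funext idx ω
    simp only [vsub_eq_sub, sub_zero, vadd_eq_add, Pi.add_apply, gFun, gLin, gLinFun,
      LinearMap.coe_mk, AddHom.coe_mk, Pi.zero_apply]
    rcases finSumFinEquiv.symm idx with i | k
    · simp only [Sum.elim_inl, Pi.zero_apply]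
      split_ifs <;> ring
    · simp only [Sum.elim_inr, Pi.zero_apply]
      have h0 : (∑ a : Idx H, if (a.2 : E) = eE k ∧ ω = chi H a then (0:ℝ) else 0) = 0 := by simp
      have h0' : (∑ a : Idx H, if (a.2 : E) = eE k then (0:ℝ) else 0) = 0 := by simp
      rw [h0, h0']
      split_ifs <;> ring)

@[simp] lemma gmap_apply (H : Fin m → Finset E) (y : Fin m → ℝ) : gmap H y = gFun H y := by
  simp [gmap, AffineMap.coe_mk']

@[simp] lemma gFun_emb (H : Fin m → Finset E) (y : Fin m → ℝ) (i : Fin m) (ω : F2 (dd H)) :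
    gFun H y (emb E i) ω
      = (if ω = vv H i then y i else 0) + (if ω = 0 then 1 - y i else 0) := by
  simp [gFun, emb]

@[simp] lemma gFun_kemb (H : Fin m → Finset E) (y : Fin m → ℝ) (k : Fin (Fintype.card E))
    (ω : F2 (dd H)) :
    gFun H y (kemb m k) ω
      = (∑ a : Idx H, if (a.2 : E) = eE k ∧ ω = chi H a then y a.1 else 0) +
        (if ω = 0 then 1 - ∑ a : Idx H, if (a.2 : E) = eE k then y a.1 else 0 else 0) := by
  simp [gFun, kemb]

lemma fmap_incVec (H : Fin m → Finset E) (ξ : Fin (m + Fintype.card E) → F2 (dd H)) :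
    fmap H (incVec ξ) = fun i => if i ∈ Sof H ξ then 1 else 0 := by
  funext i
  rw [fmap_apply]
  simp only [incVec, mem_Sof]

lemma g_f (H : Fin m → Finset E) (hH : ∀ i, (H i).Nonempty) {S : Finset (Fin m)}
    (hS : IsPacking H S) :
    gFun H (fun i => if i ∈ S then (1:ℝ) else 0)
      = fun idx ω => if xiS H S idx = ω then (1:ℝ) else 0 := by
  set y : Fin m → ℝ := fun i => if i ∈ S then (1:ℝ) else 0 with hy
  refine funext (idx_cases (fun i => ?_) (fun k => ?_))
  · funext ω
    rw [gFun_emb, xiS_emb]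
    by_cases hi : i ∈ S
    · have hyi : y i = 1 := by simp [hy, hi]
      rw [if_pos hi, hyi]
      by_cases hω : ω = vv H i
      · have h2 : vv H i = ω := hω.symm
        have h3 : ω ≠ 0 := by rw [hω]; exact vv_ne_zero H i (hH i)
        rw [if_pos hω, if_pos h2, if_neg h3]
        ring
      · have h2 : vv H i ≠ ω := fun h => hω h.symm
        rw [if_neg hω, if_neg h2]
        split_ifs <;> ring
    · have hyi : y i = 0 := by simp [hy, hi]
      rw [if_neg hi, hyi]
      by_cases hω : ω = 0
      · have h2 : (0 : F2 (dd H)) = ω := hω.symm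
        rw [if_pos hω, if_pos h2]
        split_ifs <;> ring
      · have h2 : (0 : F2 (dd H)) ≠ ω := fun h => hω h.symm
        rw [if_neg hω, if_neg h2]
        split_ifs <;> ring
  · funext ω
    rw [gFun_kemb]
    by_cases hex : ∃ i ∈ S, eE k ∈ H i
    · obtain ⟨i₀, hi₀S, hi₀⟩ := hex
      have hxiS := xiS_kemb_eq_chi hS hi₀S hi₀
      set a₀ : Idx H := ⟨i₀, ⟨eE k, hi₀⟩⟩ with ha₀
      rw [hxiS]
      have huniq : ∀ a : Idx H, (a.2 : E) = eE k → a.1 ∈ S → a = a₀ := by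
        intro a h1 h2
        rw [ha₀, Idx_ext]
        refine ⟨?_, h1⟩
        by_contra hne
        have hd := hS _ h2 _ hi₀S hne
        have hmem : (a.2 : E) ∈ H a.1 := a.2.2
        rw [h1] at hmem
        exact (Finset.disjoint_left.mp hd) hmem hi₀
      have hsum2 : (∑ a : Idx H, if (a.2 : E) = eE k then y a.1 else 0) = 1 := by
        have hterm : ∀ a : Idx H, (if (a.2 : E) = eE k then y a.1 else 0)
            = if a = a₀ then 1 else 0 := by
          intro a
          by_cases h : a = a₀
          · rw [if_pos h, h, ha₀]
            simp [hy, hi₀S]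
          · rw [if_neg h]
            by_cases h1 : (a.2 : E) = eE k
            · rw [if_pos h1]
              simp only [hy]
              exact if_neg (fun h2 => h (huniq a h1 h2))
            · rw [if_neg h1]
        rw [Finset.sum_congr rfl (fun a _ => hterm a), Finset.sum_ite_eq' Finset.univ a₀]
        simp
      rw [hsum2]
      by_cases hω : ω = chi H a₀
      · have hsum1 : (∑ a : Idx H, if (a.2 : E) = eE k ∧ ω = chi H a then y a.1 else 0) = 1 := by
          have hterm : ∀ a : Idx H, (if (a.2 : E) = eE k ∧ ω = chi H a then y a.1 else 0)
              = if a = a₀ then 1 else 0 := by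
            intro a
            by_cases h : a = a₀
            · rw [if_pos h, h]
              have hc : ((a₀.2 : E) = eE k ∧ ω = chi H a₀) := ⟨rfl, hω⟩
              rw [if_pos hc]
              simp [hy, ha₀, hi₀S]
            · rw [if_neg h, if_neg]
              rintro ⟨h1, h2⟩
              exact h (chi_inj H (h2.symm.trans hω))
          rw [Finset.sum_congr rfl (fun a _ => hterm a), Finset.sum_ite_eq' Finset.univ a₀]
          simp
        have h2 : chi H a₀ = ω := hω.symm
        rw [hsum1, if_pos h2]
        split_ifs <;> ring
      · have hsum1 : (∑ a : Idx H, if (a.2 : E) = eE k ∧ ω = chi H a then y a.1 else 0) = 0 := by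
          refine Finset.sum_eq_zero fun a _ => ?_
          by_cases h : (a.2 : E) = eE k ∧ ω = chi H a
          · rw [if_pos h]
            simp only [hy]
            refine if_neg fun h2 => ?_
            exact hω (by rw [huniq a h.1 h2] at h; exact h.2)
          · rw [if_neg h]
        have h2 : chi H a₀ ≠ ω := fun h => hω h.symm
        rw [hsum1, if_neg h2]
        split_ifs <;> ring
    · have hxiS := xiS_kemb_eq_zero (H := H) (S := S) hex
      rw [hxiS]
      have hsum2 : (∑ a : Idx H, if (a.2 : E) = eE k then y a.1 else 0) = 0 := by
        refine Finset.sum_eq_zero fun a _ => ?_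
        by_cases h : (a.2 : E) = eE k
        · rw [if_pos h]
          simp only [hy]
          exact if_neg (fun h2 => hex ⟨a.1, h2, h ▸ a.2.2⟩)
        · rw [if_neg h]
      have hsum1 : (∑ a : Idx H, if (a.2 : E) = eE k ∧ ω = chi H a then y a.1 else 0) = 0 := by
        refine Finset.sum_eq_zero fun a _ => ?_
        by_cases h : (a.2 : E) = eE k ∧ ω = chi H a
        · rw [if_pos h]
          simp only [hy]
          exact if_neg (fun h2 => hex ⟨a.1, h2, h.1 ▸ a.2.2⟩)
        · rw [if_neg h]
      rw [hsum1, hsum2]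
      by_cases hω : ω = 0
      · have h2 : (0 : F2 (dd H)) = ω := hω.symm
        rw [if_pos hω, if_pos h2]; ring
      · have h2 : (0 : F2 (dd H)) ≠ ω := fun h => hω h.symm
        rw [if_neg hω, if_neg h2]; ring

lemma ncard_Be (H : Fin m → Finset E) (e : E) :
    (Be H e).ncard = 1 + (Finset.univ.filter (fun i => e ∈ H i)).card := by
  have h0 : (0 : F2 (dd H)) ∉ chi H '' {a : Idx H | (a.2 : E) = e} := by
    rintro ⟨a, -, ha⟩
    exact chi_ne_zero H a ha
  rw [Be, Set.ncard_insert_of_notMem h0 (Set.toFinite _),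
    Set.ncard_image_of_injective _ (chi_inj H)]
  have hcard : {a : Idx H | (a.2 : E) = e}.ncard
      = (Finset.univ.filter (fun i => e ∈ H i)).card := by
    rw [← Nat.card_coe_set_eq]
    have ψ : {a : Idx H | (a.2 : E) = e} ≃ {i : Fin m // e ∈ H i} :=
      { toFun := fun a => ⟨a.1.1, by
          have h : (a.1.2 : E) = e := a.2
          have h2 := a.1.2.2
          rwa [h] at h2⟩
        invFun := fun i => ⟨⟨i.1, ⟨e, i.2⟩⟩, rfl⟩
        left_inv := fun a => by
          apply Subtype.ext
          have h : (a.1.2 : E) = e := a.2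
          exact (Idx_ext.mpr ⟨rfl, h⟩).symm
        right_inv := fun i => rfl }
    rw [Nat.card_congr ψ, Nat.card_eq_fintype_card, Fintype.card_subtype]
  rw [hcard]
  omega

lemma blockSize_BB (H : Fin m → Finset E) (hH : ∀ i, (H i).Nonempty) :
    blockSize (BB H) = 2 * m + Fintype.card E + ∑ i, (H i).card := by
  unfold blockSize
  rw [← finSumFinEquiv.sum_comp, Fintype.sum_sum_type]
  have h1 : ∀ i : Fin m, (BB H (finSumFinEquiv (Sum.inl i))).ncard = 2 := by
    intro i
    rw [show finSumFinEquiv (Sum.inl i) = emb E i from rfl, BB_emb]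
    exact Set.ncard_pair (Ne.symm (vv_ne_zero H i (hH i)))
  have h2 : ∀ k : Fin (Fintype.card E), (BB H (finSumFinEquiv (Sum.inr k))).ncard
      = 1 + (Finset.univ.filter (fun i => eE k ∈ H i)).card := by
    intro k
    rw [show finSumFinEquiv (Sum.inr k) = kemb m k from rfl, BB_kemb, ncard_Be]
  rw [Finset.sum_congr rfl (fun i _ => h1 i), Finset.sum_congr rfl (fun k _ => h2 k)]
  rw [Finset.sum_add_distrib, Finset.sum_const, Finset.sum_const]
  have h3 : (∑ k : Fin (Fintype.card E), (Finset.univ.filter (fun i => eE k ∈ H i)).card)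
      = ∑ i, (H i).card := by
    rw [(eE (E := E)).sum_comp (fun e => (Finset.univ.filter (fun i => e ∈ H i)).card)]
    simp_rw [Finset.card_filter]
    rw [Finset.sum_comm]
    refine Finset.sum_congr rfl fun i _ => ?_
    rw [Finset.sum_ite_mem, Finset.univ_inter, Finset.sum_const, Finset.card_eq_sum_ones]
    simp
  rw [h3]
  simp only [Finset.card_univ, Fintype.card_fin, smul_eq_mul, mul_one]
  ring


/-- set packing polytopes are CTPs. -/
theorem statement1 (E : Type) [Fintype E] [DecidableEq E] (m : ℕ) (hm : 1 ≤ m)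
    (H : Fin m → Finset E) (hH : ∀ i, (H i).Nonempty) (hcover : ∀ e : E, ∃ i, e ∈ H i) :
    ∃ d : ℕ, 1 ≤ d ∧ ∃ B : Fin (m + Fintype.card E) → Set (F2 d),
      (∀ i, (B i).Nonempty) ∧
      blockSize B = 2 * m + Fintype.card E + ∑ i, (H i).card ∧
      AffIso (CTP B)
        (convexHull ℝ { x : Fin m → ℝ | ∃ S : Finset (Fin m),
          (∀ i ∈ S, ∀ j ∈ S, i ≠ j → Disjoint (H i) (H j)) ∧
          x = fun i => if i ∈ S then 1 else 0 }) := by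
  classical
  have hne : Nonempty (Idx H) := ⟨⟨⟨0, hm⟩, ⟨(hH ⟨0, hm⟩).choose, (hH ⟨0, hm⟩).choose_spec⟩⟩⟩
  refine ⟨dd H, Fintype.card_pos, BB H, ?_, blockSize_BB H hH, ?_⟩
  · exact idx_cases (fun i => by rw [BB_emb]; exact ⟨0, Or.inl rfl⟩)
      (fun k => by rw [BB_kemb]; exact ⟨0, Set.mem_insert _ _⟩)
  · have himg : fmap H '' (incVec '' {ξ | IsCyclicTransversal (BB H) ξ})
        = { x : Fin m → ℝ | ∃ S : Finset (Fin m),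
            (∀ i ∈ S, ∀ j ∈ S, i ≠ j → Disjoint (H i) (H j)) ∧
            x = fun i => if i ∈ S then 1 else 0 } := by
      ext x
      constructor
      · rintro ⟨-, ⟨ξ, hξ, rfl⟩, rfl⟩
        exact ⟨Sof H ξ, Sof_packing hH hξ, fmap_incVec H ξ⟩
      · rintro ⟨S, hS, rfl⟩
        refine ⟨incVec (xiS H S), ⟨xiS H S, xiS_isCT H hH hS, rfl⟩, ?_⟩
        rw [fmap_incVec H (xiS H S)]
        funext i
        have hiff : i ∈ Sof H (xiS H S) ↔ i ∈ S := by
          rw [mem_Sof, xiS_emb]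
          constructor
          · intro h
            by_contra hi
            rw [if_neg hi] at h
            exact vv_ne_zero H i (hH i) h.symm
          · intro h
            rw [if_pos h]
        simp only [hiff]
    have hfix : ∀ x ∈ incVec '' {ξ | IsCyclicTransversal (BB H) ξ},
        gmap H (fmap H x) = x := by
      rintro x ⟨ξ, hξ, rfl⟩
      rw [fmap_incVec H ξ, gmap_apply, g_f H hH (Sof_packing hH hξ)]
      rw [← eq_xiS_Sof hH hξ]
      rfl
    have hconv : Convex ℝ {x : Fin (m + Fintype.card E) → F2 (dd H) → ℝ |
        gmap H (fmap H x) = x} := by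
      intro x hx y hy a b ha hb hab
      simp only [Set.mem_setOf_eq] at hx hy ⊢
      have h1 : ((gmap H).comp (fmap H)) (a • x + b • y)
          = a • ((gmap H).comp (fmap H)) x + b • ((gmap H).comp (fmap H)) y :=
        Convex.combo_affine_apply hab
      simp only [AffineMap.comp_apply] at h1
      rw [h1, hx, hy]
    have hsub : CTP (BB H) ⊆ {x | gmap H (fmap H x) = x} :=
      convexHull_min (fun x hx => hfix x hx) hconv
    refine ⟨fmap H, ?_, ?_⟩
    · intro x hx y hy hxy
      have h1 : gmap H (fmap H x) = x := hsub hx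
      have h2 : gmap H (fmap H y) = y := hsub hy
      calc x = gmap H (fmap H x) := h1.symm
        _ = gmap H (fmap H y) := by rw [hxy]
        _ = y := h2
    · rw [CTP, AffineMap.image_convexHull, himg]
end Aux
end

section
/- Let E be a finite set and let H_1, …, H_m (m ≥ 1) be subsets of E with |H_i| ≥ 2 for every i ∈ [m] and E = H_1 ∪ … ∪ H_m. Call a subset S ⊆ [m] a packing if H_i ∩ H_j = ∅ for all distinct i, j ∈ S, and let PACK[H] ⊆ ℝ^m be the convex hull of the incidence vectors of all packings. Then there exist d ≥ 1 and a block configuration B in 𝔽₂^d of size |E| + Σ_{i=1}^m |H_i| such that CTP[B] and PACK[H] are affinely isomorphic. -/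
open scoped Classical

set_option linter.unusedSectionVars false
set_option linter.unusedVariables false

namespace S2Aux

open Finset

variable {E : Type} [Fintype E] [DecidableEq E] {m n d : ℕ}

noncomputable def vv (H : Fin m → Finset E) (p : Fin m → E) (i : Fin m) (e : E) :
    Fin m × E → ZMod 2 :=
  fun q => if q.1 = i ∧ (if e = p i then (q.2 ∈ H i ∧ q.2 ≠ p i) else q.2 = e) then 1 else 0

lemma vv_fst {H : Fin m → Finset E} {p : Fin m → E} {i j : Fin m} {e : E} (h : j ≠ i) (e' : E) :
    vv H p i e (j, e') = 0 := by
  simp [vv, h]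

lemma vv_exists {H : Fin m → Finset E} {p : Fin m → E} {i : Fin m} {e : E}
    (hH : 2 ≤ (H i).card) (he : e ∈ H i) : ∃ x, vv H p i e (i, x) = 1 := by
  by_cases hpe : e = p i
  · obtain ⟨x, hx, hxne⟩ := Finset.exists_mem_ne (show 1 < (H i).card by omega) (p i)
    exact ⟨x, by simp [vv, hpe, hx, hxne]⟩
  · exact ⟨e, by simp [vv, hpe]⟩

lemma vv_ne_zero {H : Fin m → Finset E} {p : Fin m → E} {i : Fin m} {e : E}
    (hH : 2 ≤ (H i).card) (he : e ∈ H i) : vv H p i e ≠ 0 := by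
  intro h
  obtain ⟨x, hx⟩ := vv_exists (p := p) hH he
  rw [h] at hx
  simp at hx

lemma vv_inj {H : Fin m → Finset E} {p : Fin m → E} {i j : Fin m} {e : E}
    (hH : 2 ≤ (H i).card) (hi : e ∈ H i)
    (h : vv H p i e = vv H p j e) : i = j := by
  by_contra hne
  obtain ⟨x, hx⟩ := vv_exists (p := p) hH hi
  rw [h, vv_fst (Ne.symm ?_)] at hx
  · simp at hx
  · exact fun hij => hne hij.symm


lemma zmod2_add_eq_zero : ∀ a b : ZMod 2, a + b = 0 → a = b := by decide

lemma vv_sum_apply {H : Fin m → Finset E} {p : Fin m → E} (i : Fin m) (A : Finset E) (e' : E) :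
    (∑ e ∈ A, vv H p i e) (i, e')
      = (if p i ∈ A ∧ e' ∈ H i ∧ e' ≠ p i then 1 else 0)
        + (if e' ∈ A ∧ e' ≠ p i then 1 else 0) := by
  classical
  rw [Finset.sum_apply]
  have hterm : ∀ e ∈ A, vv H p i e (i, e')
      = (if e = p i then (if e' ∈ H i ∧ e' ≠ p i then (1:ZMod 2) else 0) else 0)
        + (if e' = e ∧ e ≠ p i then 1 else 0) := by
    intro e _
    by_cases hpe : e = p i
    · subst hpe
      simp [vv]
    · simp [vv, hpe]
  rw [Finset.sum_congr rfl hterm, Finset.sum_add_distrib]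
  congr 1
  · rw [Finset.sum_ite_eq' A (p i)]
    by_cases h : p i ∈ A <;> simp [h, and_assoc]
  · have : ∀ e ∈ A, (if e' = e ∧ e ≠ p i then (1:ZMod 2) else 0)
        = if e' = e then (if e ≠ p i then (1:ZMod 2) else 0) else 0 := by
      intro e _
      by_cases h1 : e' = e <;> simp [h1]
    rw [Finset.sum_congr rfl this, Finset.sum_ite_eq A e']
    by_cases h : e' ∈ A <;> simp [h]

lemma vv_sum_full {H : Fin m → Finset E} {p : Fin m → E} {i : Fin m} (hp : p i ∈ H i) :
    ∑ e ∈ H i, vv H p i e = 0 := by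
  funext q
  obtain ⟨j, e'⟩ := q
  by_cases hj : j = i
  · subst hj
    rw [vv_sum_apply]
    simp only [Pi.zero_apply]
    by_cases h : e' ∈ H j ∧ e' ≠ p j
    · rw [if_pos ⟨hp, h⟩, if_pos h, CharTwo.add_self_eq_zero]
    · rw [if_neg (fun hc => h hc.2), if_neg h, add_zero]
  · rw [Finset.sum_apply]
    simp [vv_fst (p := p) hj]

lemma vv_sum_zero_iff {H : Fin m → Finset E} {p : Fin m → E} {i : Fin m} (hp : p i ∈ H i)
    {A : Finset E} (hA : A ⊆ H i) :
    ∑ e ∈ A, vv H p i e = 0 ↔ (A = ∅ ∨ A = H i) := by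
  constructor
  · intro hsum
    have key : ∀ e', (if p i ∈ A ∧ e' ∈ H i ∧ e' ≠ p i then (1:ZMod 2) else 0)
        = if e' ∈ A ∧ e' ≠ p i then 1 else 0 := by
      intro e'
      apply zmod2_add_eq_zero
      rw [← vv_sum_apply, hsum]
      rfl
    by_cases hpA : p i ∈ A
    · right
      apply Finset.Subset.antisymm hA
      intro e' he'
      by_cases hep : e' = p i
      · exact hep ▸ hpA
      · have := key e'
        rw [if_pos ⟨hpA, he', hep⟩] at this
        by_cases h2 : e' ∈ A ∧ e' ≠ p i
        · exact h2.1
        · rw [if_neg h2] at this; simp at this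
    · left
      rw [Finset.eq_empty_iff_forall_notMem]
      intro e' he'
      have hep : e' ≠ p i := fun h => hpA (h ▸ he')
      have := key e'
      rw [if_neg (by tauto), if_pos ⟨he', hep⟩] at this
      simp at this
  · rintro (rfl | rfl)
    · simp
    · exact vv_sum_full hp


noncomputable def UU (κ : Fin d ≃ Fin m × E) (H : Fin m → Finset E) (p : Fin m → E)
    (i : Fin m) (e : E) : F2 d := fun k => vv H p i e (κ k)

lemma comp_eq_iff (κ : Fin d ≃ Fin m × E) (f g : Fin m × E → ZMod 2) :
    (fun k => f (κ k)) = (fun k => g (κ k)) ↔ f = g := by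
  constructor
  · intro h
    funext q
    have := congrFun h (κ.symm q)
    simpa using this
  · intro h; rw [h]

lemma UU_eq_iff (κ : Fin d ≃ Fin m × E) {H : Fin m → Finset E} {p : Fin m → E}
    {i j : Fin m} {e e' : E} :
    UU κ H p i e = UU κ H p j e' ↔ vv H p i e = vv H p j e' := comp_eq_iff κ _ _

lemma UU_ne_zero (κ : Fin d ≃ Fin m × E) {H : Fin m → Finset E} {p : Fin m → E}
    {i : Fin m} {e : E} (hH : 2 ≤ (H i).card) (he : e ∈ H i) : UU κ H p i e ≠ 0 := by
  intro h
  exact vv_ne_zero hH he ((comp_eq_iff κ (vv H p i e) 0).mp h)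

noncomputable def Bs (κ : Fin d ≃ Fin m × E) (H : Fin m → Finset E) (p : Fin m → E) (e : E) :
    Set (F2 d) := insert 0 {ω | ∃ i, e ∈ H i ∧ ω = UU κ H p i e}

def IsPacking (H : Fin m → Finset E) (S : Finset (Fin m)) : Prop :=
  ∀ i ∈ S, ∀ j ∈ S, i ≠ j → Disjoint (H i) (H j)

lemma pack_unique {H : Fin m → Finset E} {S : Finset (Fin m)} (hS : IsPacking H S)
    {i j : Fin m} {e : E} (hi : i ∈ S) (hj : j ∈ S) (he : e ∈ H i) (he' : e ∈ H j) : i = j := by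
  by_contra hne
  exact (Finset.disjoint_left.mp (hS i hi j hj hne)) he he'

noncomputable def xiS (κ : Fin d ≃ Fin m × E) (ε : Fin n ≃ E) (H : Fin m → Finset E)
    (p : Fin m → E) (S : Finset (Fin m)) : Fin n → F2 d :=
  fun k => if h : ∃ i ∈ S, ε k ∈ H i then UU κ H p h.choose (ε k) else 0

lemma ncard_Bs (κ : Fin d ≃ Fin m × E) {H : Fin m → Finset E} {p : Fin m → E}
    (hH : ∀ i, 2 ≤ (H i).card) (e : E) :
    (Bs κ H p e).ncard = 1 + (Finset.univ.filter fun i => e ∈ H i).card := by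
  have hset : {ω : F2 d | ∃ i, e ∈ H i ∧ ω = UU κ H p i e}
      = (fun i => UU κ H p i e) '' {i | e ∈ H i} := by
    ext ω
    simp only [Set.mem_setOf_eq, Set.mem_image]
    constructor
    · rintro ⟨i, h1, h2⟩; exact ⟨i, h1, h2.symm⟩
    · rintro ⟨i, h1, h2⟩; exact ⟨i, h1, h2.symm⟩
  have h0 : (0 : F2 d) ∉ {ω : F2 d | ∃ i, e ∈ H i ∧ ω = UU κ H p i e} := by
    rintro ⟨i, he, h⟩
    exact UU_ne_zero κ (hH i) he h.symm
  have hinj : Set.InjOn (fun i => UU κ H p i e) {i | e ∈ H i} := by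
    intro i hi j hj hij
    exact vv_inj (hH i) hi (UU_eq_iff κ |>.mp hij)
  have hfin : {i : Fin m | e ∈ H i} = ((Finset.univ.filter fun i => e ∈ H i) : Finset (Fin m)) := by
    ext i; simp
  rw [Bs, Set.ncard_insert_of_notMem h0 (Set.toFinite _), hset,
    Set.ncard_image_of_injOn hinj, hfin, Set.ncard_coe_finset, add_comm]


lemma mem_Bs_iff {κ : Fin d ≃ Fin m × E} {H : Fin m → Finset E} {p : Fin m → E} {e : E}
    {ω : F2 d} : ω ∈ Bs κ H p e ↔ ω = 0 ∨ ∃ i, e ∈ H i ∧ ω = UU κ H p i e := by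
  simp [Bs]

lemma xiS_mem (κ : Fin d ≃ Fin m × E) (ε : Fin n ≃ E) (H : Fin m → Finset E) (p : Fin m → E)
    (S : Finset (Fin m)) (k : Fin n) : xiS κ ε H p S k ∈ Bs κ H p (ε k) := by
  rw [xiS]
  split
  · next h => exact Set.mem_insert_of_mem _ ⟨h.choose, h.choose_spec.2, rfl⟩
  · exact Set.mem_insert _ _

lemma xiS_sum (κ : Fin d ≃ Fin m × E) (ε : Fin n ≃ E) {H : Fin m → Finset E} {p : Fin m → E}
    (hp : ∀ i, p i ∈ H i) {S : Finset (Fin m)} (hS : IsPacking H S) :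
    ∑ k, xiS κ ε H p S k = 0 := by
  classical
  have hFsum : ∑ e : E, (if h : ∃ i ∈ S, e ∈ H i then vv H p h.choose e else 0) = 0 := by
    funext q
    obtain ⟨j, e'⟩ := q
    rw [Finset.sum_apply]
    have hterm : ∀ e ∈ Finset.univ,
        (if h : ∃ i ∈ S, e ∈ H i then vv H p h.choose e else 0) (j, e')
        = if e ∈ H j ∧ j ∈ S then vv H p j e (j, e') else 0 := by
      intro e _
      by_cases h : ∃ i ∈ S, e ∈ H i
      · rw [dif_pos h]
        by_cases hij : h.choose = j
        · rw [if_pos ⟨hij ▸ h.choose_spec.2, hij ▸ h.choose_spec.1⟩, hij]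
        · rw [vv_fst (p := p) (fun hc => hij hc.symm), if_neg]
          rintro ⟨h1, h2⟩
          exact hij (pack_unique hS h.choose_spec.1 h2 h.choose_spec.2 h1)
      · rw [dif_neg h, if_neg]
        · rfl
        · rintro ⟨h1, h2⟩
          exact h ⟨j, h2, h1⟩
    rw [Finset.sum_congr rfl hterm]
    by_cases hjS : j ∈ S
    · have h2 : ∀ e ∈ Finset.univ, (if e ∈ H j ∧ j ∈ S then vv H p j e (j, e') else 0)
          = if e ∈ H j then vv H p j e (j, e') else 0 := by
        intro e _
        by_cases h3 : e ∈ H j <;> simp [h3, hjS]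
      rw [Finset.sum_congr rfl h2, Finset.sum_ite_mem, Finset.univ_inter]
      have hfull := congrFun (vv_sum_full (hp j)) (j, e')
      rw [Finset.sum_apply] at hfull
      rw [hfull]
    · have h2 : ∀ e ∈ Finset.univ, (if e ∈ H j ∧ j ∈ S then vv H p j e (j, e') else 0)
          = 0 := by
        intro e _
        rw [if_neg (fun hc => hjS hc.2)]
      rw [Finset.sum_congr rfl h2]
      simp
  have h1 : ∑ k, xiS κ ε H p S k
      = ∑ e : E, (if h : ∃ i ∈ S, e ∈ H i then UU κ H p h.choose e else 0) :=
    Fintype.sum_equiv ε _ _ (fun k => rfl)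
  rw [h1]
  have h2 : ∀ e ∈ Finset.univ, (if h : ∃ i ∈ S, e ∈ H i then UU κ H p h.choose e else 0)
      = fun k => (if h : ∃ i ∈ S, e ∈ H i then vv H p h.choose e else 0) (κ k) := by
    intro e _
    by_cases h : ∃ i ∈ S, e ∈ H i
    · rw [dif_pos h]; funext k; rw [dif_pos h]; rfl
    · rw [dif_neg h]; funext k; rw [dif_neg h]; rfl
  rw [Finset.sum_congr rfl h2]
  funext k
  rw [Finset.sum_apply]
  have hptw := congrFun hFsum (κ k)
  rw [Finset.sum_apply] at hptw
  exact hptw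

lemma ct_decomp (κ : Fin d ≃ Fin m × E) (ε : Fin n ≃ E) {H : Fin m → Finset E} {p : Fin m → E}
    (hH : ∀ i, 2 ≤ (H i).card) (hp : ∀ i, p i ∈ H i) {ξ : Fin n → F2 d}
    (hmem : ∀ k, ξ k ∈ Bs κ H p (ε k)) (hsum : ∑ k, ξ k = 0) :
    ∃ S : Finset (Fin m), IsPacking H S ∧ ξ = xiS κ ε H p S := by
  classical
  set T : Fin m → Finset E :=
    fun i => Finset.univ.filter (fun e => e ∈ H i ∧ ξ (ε.symm e) = UU κ H p i e) with hT
  have hwe : ∀ e : E, ξ (ε.symm e) = fun k' =>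
      (if h : ∃ i, e ∈ H i ∧ ξ (ε.symm e) = UU κ H p i e
        then vv H p h.choose e else 0) (κ k') := by
    intro e
    by_cases h : ∃ i, e ∈ H i ∧ ξ (ε.symm e) = UU κ H p i e
    · simp only [dif_pos h]
      exact h.choose_spec.2
    · simp only [dif_neg h]
      have hb := mem_Bs_iff.mp (hmem (ε.symm e))
      rw [Equiv.apply_symm_apply] at hb
      rcases hb with h0 | ⟨i, hei, heq⟩
      · exact h0
      · exact absurd ⟨i, hei, heq⟩ h
  have hWsum : ∑ e : E, (if h : ∃ i, e ∈ H i ∧ ξ (ε.symm e) = UU κ H p i e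
      then vv H p h.choose e else 0) = 0 := by
    apply (comp_eq_iff κ _ 0).mp
    funext k
    rw [Finset.sum_apply]
    have : ∀ e ∈ Finset.univ,
        (if h : ∃ i, e ∈ H i ∧ ξ (ε.symm e) = UU κ H p i e
          then vv H p h.choose e else 0) (κ k) = ξ (ε.symm e) k := by
      intro e _
      exact (congrFun (hwe e) k).symm
    rw [Finset.sum_congr rfl this]
    have h2 : ∑ e : E, ξ (ε.symm e) k = (∑ e : E, ξ (ε.symm e)) k := by
      rw [Finset.sum_apply]
    rw [h2, show (∑ e : E, ξ (ε.symm e)) = ∑ k', ξ k' from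
      (Fintype.sum_equiv ε _ _ (fun k' => by simp)).symm, hsum]
    rfl
  have hTdich : ∀ i, T i = ∅ ∨ T i = H i := by
    intro i
    apply (vv_sum_zero_iff (hp i) (fun e he => (Finset.mem_filter.mp he).2.1)).mp
    funext q
    obtain ⟨j, e'⟩ := q
    by_cases hj : j = i
    · subst hj
      rw [Finset.sum_apply]
      have hterm : ∀ e ∈ Finset.univ,
          (if e ∈ T j then vv H p j e (j, e') else 0)
          = (if h : ∃ i, e ∈ H i ∧ ξ (ε.symm e) = UU κ H p i e
              then vv H p h.choose e else 0) (j, e') := by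
        intro e _
        by_cases h : ∃ i, e ∈ H i ∧ ξ (ε.symm e) = UU κ H p i e
        · rw [dif_pos h]
          by_cases hij : h.choose = j
          · rw [if_pos (Finset.mem_filter.mpr
              ⟨Finset.mem_univ _, hij ▸ h.choose_spec.1, hij ▸ h.choose_spec.2⟩), hij]
          · rw [vv_fst (p := p) (fun hc => hij hc.symm), if_neg]
            intro hcT
            have h1 := (Finset.mem_filter.mp hcT).2
            have h2 := h.choose_spec
            have : UU κ H p h.choose e = UU κ H p j e := h2.2.symm.trans h1.2
            exact hij (vv_inj (hH h.choose) h2.1 ((UU_eq_iff κ).mp this))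
        · rw [dif_neg h, if_neg]
          · rfl
          · intro hcT
            have h1 := (Finset.mem_filter.mp hcT).2
            exact h ⟨j, h1.1, h1.2⟩
      rw [← Finset.univ_inter (T j), ← Finset.sum_ite_mem, Finset.sum_congr rfl hterm]
      have hptw := congrFun hWsum (j, e')
      rw [Finset.sum_apply] at hptw
      exact hptw
    · rw [Finset.sum_apply]
      have : ∀ e ∈ T i, vv H p i e (j, e') = 0 := fun e _ => vv_fst (p := p) hj e'
      rw [Finset.sum_congr rfl this]
      simp
  refine ⟨Finset.univ.filter (fun i => T i = H i), ?_, ?_⟩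
  · intro i hi j hj hij
    rw [Finset.disjoint_left]
    intro e hei hej
    have hTi : T i = H i := (Finset.mem_filter.mp hi).2
    have hTj : T j = H j := (Finset.mem_filter.mp hj).2
    have h1 := (Finset.mem_filter.mp (hTi ▸ hei : e ∈ T i)).2
    have h2 := (Finset.mem_filter.mp (hTj ▸ hej : e ∈ T j)).2
    have : UU κ H p i e = UU κ H p j e := h1.2.symm.trans h2.2
    exact hij (vv_inj (hH i) h1.1 ((UU_eq_iff κ).mp this))
  · funext k
    rw [xiS]
    by_cases hc : ∃ i ∈ Finset.univ.filter (fun i => T i = H i), ε k ∈ H i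
    · rw [dif_pos hc]
      have hi0 := hc.choose_spec
      have hTi : T hc.choose = H hc.choose := (Finset.mem_filter.mp hi0.1).2
      have hmemT : ε k ∈ T hc.choose := hTi ▸ hi0.2
      have := (Finset.mem_filter.mp hmemT).2.2
      rw [Equiv.symm_apply_apply] at this
      exact this
    · rw [dif_neg hc]
      rcases mem_Bs_iff.mp (hmem k) with h0 | ⟨i, hei, heq⟩
      · exact h0
      · exfalso
        have heT : ε k ∈ T i := Finset.mem_filter.mpr
          ⟨Finset.mem_univ _, hei, by rw [Equiv.symm_apply_apply]; exact heq⟩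
        have hTi : T i = H i := (hTdich i).resolve_left (Finset.ne_empty_of_mem heT)
        exact hc ⟨i, Finset.mem_filter.mpr ⟨Finset.mem_univ _, hTi⟩, hei⟩

noncomputable def flin (κ : Fin d ≃ Fin m × E) (ε : Fin n ≃ E) (H : Fin m → Finset E)
    (p : Fin m → E) : (Fin n → F2 d → ℝ) →ₗ[ℝ] (Fin m → ℝ) where
  toFun x := fun i => x (ε.symm (p i)) (UU κ H p i (p i))
  map_add' x y := rfl
  map_smul' c x := rfl

lemma flin_apply (κ : Fin d ≃ Fin m × E) (ε : Fin n ≃ E) (H : Fin m → Finset E)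
    (p : Fin m → E) (x : Fin n → F2 d → ℝ) (i : Fin m) :
    flin κ ε H p x i = x (ε.symm (p i)) (UU κ H p i (p i)) := rfl

lemma xiS_apply_eq (κ : Fin d ≃ Fin m × E) (ε : Fin n ≃ E) {H : Fin m → Finset E}
    {p : Fin m → E} {S : Finset (Fin m)} (hS : IsPacking H S) {k : Fin n} {i : Fin m}
    (hiS : i ∈ S) (hei : ε k ∈ H i) : xiS κ ε H p S k = UU κ H p i (ε k) := by
  rw [xiS]
  have h : ∃ j ∈ S, ε k ∈ H j := ⟨i, hiS, hei⟩
  rw [dif_pos h]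
  have hspec := h.choose_spec
  rw [pack_unique hS hspec.1 hiS hspec.2 hei]

lemma xiS_apply_zero (κ : Fin d ≃ Fin m × E) (ε : Fin n ≃ E) {H : Fin m → Finset E}
    {p : Fin m → E} {S : Finset (Fin m)} {k : Fin n}
    (hc : ¬ ∃ i ∈ S, ε k ∈ H i) : xiS κ ε H p S k = 0 := by
  rw [xiS, dif_neg hc]

lemma flin_incVec_xiS (κ : Fin d ≃ Fin m × E) (ε : Fin n ≃ E) {H : Fin m → Finset E}
    {p : Fin m → E} (hH : ∀ i, 2 ≤ (H i).card) (hp : ∀ i, p i ∈ H i)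
    {S : Finset (Fin m)} (hS : IsPacking H S) :
    flin κ ε H p (incVec (xiS κ ε H p S)) = fun i => if i ∈ S then (1:ℝ) else 0 := by
  funext i
  rw [flin_apply, incVec]
  have hx : ε (ε.symm (p i)) = p i := Equiv.apply_symm_apply ε (p i)
  by_cases hiS : i ∈ S
  · rw [if_pos hiS, if_pos]
    rw [xiS_apply_eq κ ε hS hiS (hx.symm ▸ hp i), hx]
  · rw [if_neg hiS, if_neg]
    by_cases hc : ∃ j ∈ S, ε (ε.symm (p i)) ∈ H j
    · obtain ⟨j, hjS, hje⟩ := hc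
      rw [xiS_apply_eq κ ε hS hjS hje, hx]
      intro heq
      have : j = i := vv_inj (hH j) (hx ▸ hje) ((UU_eq_iff κ).mp heq)
      exact hiS (this ▸ hjS)
    · rw [xiS_apply_zero κ ε hc]
      exact fun h0 => UU_ne_zero κ (hH i) (hp i) h0.symm

noncomputable def GG (κ : Fin d ≃ Fin m × E) (ε : Fin n ≃ E) (H : Fin m → Finset E)
    (p : Fin m → E) (y : Fin m → ℝ) : Fin n → F2 d → ℝ :=
  fun k ω => (∑ i, if ε k ∈ H i ∧ ω = UU κ H p i (ε k) then y i else 0)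
    + (if ω = 0 then 1 - ∑ i ∈ Finset.univ.filter (fun i => ε k ∈ H i), y i else 0)

lemma GG_comb (κ : Fin d ≃ Fin m × E) (ε : Fin n ≃ E) (H : Fin m → Finset E)
    (p : Fin m → E) {a b : ℝ} (hab : a + b = 1) (u v : Fin m → ℝ) :
    GG κ ε H p (a • u + b • v) = a • GG κ ε H p u + b • GG κ ε H p v := by
  funext k ω
  simp only [GG, Pi.add_apply, Pi.smul_apply, smul_eq_mul]
  have h1 : ∀ i ∈ Finset.univ, (if ε k ∈ H i ∧ ω = UU κ H p i (ε k) then a * u i + b * v i else 0)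
      = a * (if ε k ∈ H i ∧ ω = UU κ H p i (ε k) then u i else 0)
        + b * (if ε k ∈ H i ∧ ω = UU κ H p i (ε k) then v i else 0) := by
    intro i _
    by_cases h : ε k ∈ H i ∧ ω = UU κ H p i (ε k) <;> simp [h]
  rw [Finset.sum_congr rfl h1, Finset.sum_add_distrib, ← Finset.mul_sum, ← Finset.mul_sum]
  have h2 : ∑ i ∈ Finset.univ.filter (fun i => ε k ∈ H i), (a * u i + b * v i)
      = a * (∑ i ∈ Finset.univ.filter (fun i => ε k ∈ H i), u i)
        + b * (∑ i ∈ Finset.univ.filter (fun i => ε k ∈ H i), v i) := by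
    rw [Finset.sum_add_distrib, ← Finset.mul_sum, ← Finset.mul_sum]
  by_cases hω : ω = 0
  · rw [if_pos hω, if_pos hω, if_pos hω, h2]
    linear_combination -hab
  · rw [if_neg hω, if_neg hω, if_neg hω]
    ring

lemma GG_chi (κ : Fin d ≃ Fin m × E) (ε : Fin n ≃ E) {H : Fin m → Finset E}
    {p : Fin m → E} (hH : ∀ i, 2 ≤ (H i).card) (hp : ∀ i, p i ∈ H i)
    {S : Finset (Fin m)} (hS : IsPacking H S) :
    GG κ ε H p (fun i => if i ∈ S then (1:ℝ) else 0) = incVec (xiS κ ε H p S) := by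
  classical
  funext k ω
  rw [GG, incVec]
  by_cases hc : ∃ i ∈ S, ε k ∈ H i
  · have hspec := hc.choose_spec
    have huniq : ∀ j, j ∈ S → ε k ∈ H j → j = hc.choose :=
      fun j hj hej => pack_unique hS hj hspec.1 hej hspec.2
    have hxi : xiS κ ε H p S k = UU κ H p hc.choose (ε k) := by
      rw [xiS, dif_pos hc]
    have hsum1 : (∑ i, if ε k ∈ H i ∧ ω = UU κ H p i (ε k)
          then (if i ∈ S then (1:ℝ) else 0) else 0)
        = if ω = UU κ H p hc.choose (ε k) then 1 else 0 := by
      rw [Finset.sum_eq_single hc.choose]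
      · simp [hspec.1, hspec.2]
      · intro j _ hj
        by_cases h1 : ε k ∈ H j ∧ ω = UU κ H p j (ε k)
        · rw [if_pos h1, if_neg (fun hjS => hj (huniq j hjS h1.1))]
        · rw [if_neg h1]
      · exact fun h => absurd (Finset.mem_univ _) h
    have hsum2 : (∑ i ∈ Finset.univ.filter (fun i => ε k ∈ H i),
        (if i ∈ S then (1:ℝ) else 0)) = 1 := by
      rw [Finset.sum_ite_mem]
      have : (Finset.univ.filter (fun i => ε k ∈ H i)) ∩ S = {hc.choose} := by
        ext j
        simp only [Finset.mem_inter, Finset.mem_filter, Finset.mem_univ, true_and,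
          Finset.mem_singleton]
        constructor
        · rintro ⟨h1, h2⟩; exact huniq j h2 h1
        · rintro rfl; exact ⟨hspec.2, hspec.1⟩
      rw [this]
      simp
    rw [hsum1, hsum2, hxi, sub_self, ite_self, add_zero]
    by_cases h : ω = UU κ H p hc.choose (ε k)
    · rw [if_pos h, if_pos h.symm]
    · rw [if_neg h, if_neg (fun hc' => h hc'.symm)]
  · have hxi : xiS κ ε H p S k = 0 := by rw [xiS, dif_neg hc]
    have hsum1 : (∑ i, if ε k ∈ H i ∧ ω = UU κ H p i (ε k)
          then (if i ∈ S then (1:ℝ) else 0) else 0) = 0 := by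
      apply Finset.sum_eq_zero
      intro i _
      by_cases h1 : ε k ∈ H i ∧ ω = UU κ H p i (ε k)
      · rw [if_pos h1, if_neg (fun hiS => hc ⟨i, hiS, h1.1⟩)]
      · rw [if_neg h1]
    have hsum2 : (∑ i ∈ Finset.univ.filter (fun i => ε k ∈ H i),
        (if i ∈ S then (1:ℝ) else 0)) = 0 := by
      apply Finset.sum_eq_zero
      intro i hi
      rw [if_neg (fun hiS => hc ⟨i, hiS, (Finset.mem_filter.mp hi).2⟩)]
    rw [hsum1, hsum2, hxi, sub_zero, zero_add]
    by_cases hω0 : ω = 0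
    · rw [if_pos hω0, if_pos hω0.symm]
    · rw [if_neg hω0, if_neg (fun h => hω0 h.symm)]

end S2Aux

/-- smaller CTP representation of set packing polytopes. -/
theorem statement2 (E : Type) [Fintype E] [DecidableEq E] (m : ℕ) (hm : 1 ≤ m)
    (H : Fin m → Finset E) (hH : ∀ i, 2 ≤ (H i).card) (hcover : ∀ e : E, ∃ i, e ∈ H i) :
    ∃ d : ℕ, 1 ≤ d ∧ ∃ n : ℕ, 2 ≤ n ∧ ∃ B : Fin n → Set (F2 d),
      (∀ i, (B i).Nonempty) ∧
      blockSize B = Fintype.card E + ∑ i, (H i).card ∧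
      AffIso (CTP B)
        (convexHull ℝ { x : Fin m → ℝ | ∃ S : Finset (Fin m),
          (∀ i ∈ S, ∀ j ∈ S, i ≠ j → Disjoint (H i) (H j)) ∧
          x = fun i => if i ∈ S then 1 else 0 }) := by
  classical
  have hE2 : 2 ≤ Fintype.card E := le_trans (hH ⟨0, hm⟩)
    (by rw [← Finset.card_univ]; exact Finset.card_le_univ _)
  have hd1 : 1 ≤ m * Fintype.card E := by
    have : 1 * 1 ≤ m * Fintype.card E := Nat.mul_le_mul hm (by omega)
    simpa using this
  let ε : Fin (Fintype.card E) ≃ E := (Fintype.equivFin E).symm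
  let κ : Fin (m * Fintype.card E) ≃ Fin m × E :=
    finProdFinEquiv.symm.trans (Equiv.prodCongr (Equiv.refl (Fin m)) ε)
  have hpex : ∀ i, (H i).Nonempty := fun i => Finset.card_pos.mp (by have := hH i; omega)
  let p : Fin m → E := fun i => (hpex i).choose
  have hp : ∀ i, p i ∈ H i := fun i => (hpex i).choose_spec
  refine ⟨m * Fintype.card E, hd1, Fintype.card E, hE2,
    (fun k => S2Aux.Bs κ H p (ε k)), ?_, ?_, ?_⟩
  · intro k
    exact ⟨0, Set.mem_insert _ _⟩
  · rw [blockSize]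
    rw [Finset.sum_congr rfl (fun k _ => S2Aux.ncard_Bs κ hH (ε k))]
    rw [show (∑ k : Fin (Fintype.card E),
          (1 + (Finset.univ.filter fun i => (ε k) ∈ H i).card))
        = ∑ e : E, (1 + (Finset.univ.filter fun i => e ∈ H i).card) from
      Fintype.sum_equiv ε _ _ (fun k => rfl)]
    rw [Finset.sum_add_distrib]
    congr 1
    · simp
    · simp only [Finset.card_filter]
      rw [Finset.sum_comm]
      apply Finset.sum_congr rfl
      intro i _
      rw [Finset.sum_ite_mem, Finset.univ_inter]
      simp
  · refine ⟨(S2Aux.flin κ ε H p).toAffineMap, ?_, ?_⟩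
    · -- injectivity
      have hconv : Convex ℝ {x : Fin (Fintype.card E) → F2 (m * Fintype.card E) → ℝ |
          S2Aux.GG κ ε H p (S2Aux.flin κ ε H p x) = x} := by
        intro x hx y hy a b ha hb hab
        show S2Aux.GG κ ε H p (S2Aux.flin κ ε H p (a • x + b • y)) = a • x + b • y
        rw [map_add, map_smul, map_smul, S2Aux.GG_comb κ ε H p hab]
        rw [Set.mem_setOf_eq] at hx hy
        rw [hx, hy]
      have hgen : incVec '' {ξ | IsCyclicTransversal (fun k => S2Aux.Bs κ H p (ε k)) ξ}
          ⊆ {x | S2Aux.GG κ ε H p (S2Aux.flin κ ε H p x) = x} := by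
        rintro _ ⟨ξ, hξ, rfl⟩
        obtain ⟨S, hS, rfl⟩ := S2Aux.ct_decomp κ ε hH hp hξ.1 hξ.2
        show S2Aux.GG κ ε H p (S2Aux.flin κ ε H p (incVec (S2Aux.xiS κ ε H p S)))
          = incVec (S2Aux.xiS κ ε H p S)
        rw [S2Aux.flin_incVec_xiS κ ε hH hp hS, S2Aux.GG_chi κ ε hH hp hS]
      have hker : ∀ x ∈ CTP (fun k => S2Aux.Bs κ H p (ε k)),
          S2Aux.GG κ ε H p (S2Aux.flin κ ε H p x) = x :=
        fun x hx => convexHull_min hgen hconv hx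
      intro x hx y hy hxy
      have h1 := hker x hx
      have h2 := hker y hy
      have hfl : S2Aux.flin κ ε H p x = S2Aux.flin κ ε H p y := by
        have := hxy
        rwa [LinearMap.coe_toAffineMap] at this
      rw [← h1, ← h2, hfl]
    · -- image
      rw [CTP, AffineMap.image_convexHull]
      congr 1
      ext y
      constructor
      · rintro ⟨_, ⟨ξ, hξ, rfl⟩, rfl⟩
        obtain ⟨S, hS, rfl⟩ := S2Aux.ct_decomp κ ε hH hp hξ.1 hξ.2
        refine ⟨S, hS, ?_⟩
        rw [LinearMap.coe_toAffineMap, S2Aux.flin_incVec_xiS κ ε hH hp hS]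
      · rintro ⟨S, hS, rfl⟩
        refine ⟨incVec (S2Aux.xiS κ ε H p S),
          ⟨S2Aux.xiS κ ε H p S,
            ⟨fun k => S2Aux.xiS_mem κ ε H p S k, S2Aux.xiS_sum κ ε hp hS⟩, rfl⟩, ?_⟩
        rw [LinearMap.coe_toAffineMap, S2Aux.flin_incVec_xiS κ ε hH hp hS]
end

section
/- Let G be a finite simple graph with vertex set V and edge set E, and assume E ≠ ∅. A matching of G is a set M ⊆ E of edges no two of which share an endpoint; M is perfect if every vertex of G is covered by an edge of M. Let the matching polytope of G be the convex hull in ℝ^E of the incidence vectors of all matchings, and the perfect matching polytope the convex hull of the incidence vectors of all perfect matchings. Then there exist block configurations B and B′ (in suitable 𝔽₂^d) of size |V| + 2|E| and of size 2|E|, respectively, such that CTP[B] is affinely isomorphic to the matching polytope of G and CTP[B′] is affinely isomorphic to the perfect matching polytope of G. -/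
open scoped Classical

/-!
Number the edges and give vertex `v` the block consisting of `0` (`v` unmatched) and the unit
vectors `edgeVec ι e` of the edges `e ∋ v` (`v` chooses `e`). Coordinate `e` of the sum of a
transversal counts, mod 2, the endpoints of `e` that chose `e`, so the transversal is cyclic exactly
when every edge is chosen by both of its endpoints or by neither: the chosen edges form a matching,
and a perfect one when `0` is removed from the blocks. The linear map `edgeCoords` sends the
incidence vector of such a transversal to that of its matching, and on these points it is inverted
by the affine map `y ↦ incVec 0 + ∑ e, y e • (incVec (edgeLabelling ι κ e) - incVec 0)`. By the
handshake lemma the block sizes `deg v + 1`, resp. `deg v`, add up to `|V| + 2|E|`, resp. `2|E|`.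
If some vertex is isolated there is no perfect matching, and `2|E|` singleton blocks with nonzero
sum give an empty cyclic transversal polytope of the right size.
-/

theorem affIso_convexHull_of_leftInverseOn {α β : Type*} [AddCommGroup α] [Module ℝ α]
    [AddCommGroup β] [Module ℝ β] {T : Set α} {S : Set β} (f : α →ᵃ[ℝ] β) (g : β →ᵃ[ℝ] α)
    (hfT : f '' T = S) (hgf : ∀ x ∈ T, g (f x) = x) :
    AffIso (convexHull ℝ T) (convexHull ℝ S) := by
  have hid : Set.EqOn (g.comp f) (AffineMap.id ℝ α) (convexHull ℝ T) := fun _ hx =>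
    AffineMap.eqOn_affineSpan (f := g.comp f) (g := AffineMap.id ℝ α) hgf
      (convexHull_subset_affineSpan T hx)
  refine ⟨f, fun x hx y hy hxy => ?_, by rw [AffineMap.image_convexHull, hfT]⟩
  calc x = g (f x) := (hid hx).symm
    _ = g (f y) := by rw [hxy]
    _ = y := hid hy

theorem IsCyclicTransversal.mono {d n : ℕ} {B B' : Fin n → Set (F2 d)} {ξ : Fin n → F2 d}
    (h : IsCyclicTransversal B ξ) (hB : ∀ i, B i ⊆ B' i) : IsCyclicTransversal B' ξ :=
  ⟨fun i => hB i (h.1 i), h.2⟩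

theorem CTP_singleton_eq_empty {d n : ℕ} (c : Fin n → F2 d) (hc : ∑ i, c i ≠ 0) :
    CTP (fun i => {c i}) = ∅ := by
  rw [CTP, convexHull_eq_empty, Set.image_eq_empty, Set.eq_empty_iff_forall_notMem]
  rintro ξ ⟨hξ, hsum⟩
  exact hc (funext (fun i => hξ i) ▸ hsum)

theorem exists_blockSize_eq_CTP_eq_empty (m : ℕ) (hm : 1 ≤ m) :
    ∃ B : Fin m → Set (F2 m), (∀ i, (B i).Nonempty) ∧ blockSize B = m ∧ CTP B = ∅ := by
  refine ⟨fun i => {Pi.single i 1}, fun _ => Set.singleton_nonempty _, by simp [blockSize],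
    CTP_singleton_eq_empty _ fun h => ?_⟩
  have := congrFun h ⟨0, hm⟩
  simp [Finset.sum_apply, Pi.single_apply] at this

theorem ZMod.boole_add_boole_eq_zero_iff {p q : Prop} [Decidable p] [Decidable q] :
    ((if p then 1 else 0 : ZMod 2) + (if q then 1 else 0) = 0) ↔ (p ↔ q) := by
  by_cases p <;> by_cases q <;> simp_all; decide

section MatchingTransversals

variable {V : Type} {G : SimpleGraph V} {d : ℕ} (ι : G.edgeSet ≃ Fin d)

def edgeVec (e : G.edgeSet) : F2 d := Pi.single (ι e) 1

theorem edgeVec_ne_zero (e : G.edgeSet) : edgeVec ι e ≠ 0 :=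
  Pi.single_ne_zero_iff.mpr one_ne_zero

theorem edgeVec_injective : Function.Injective (edgeVec ι) := by
  intro e e' h
  have := congrFun h (ι e)
  simp only [edgeVec, Pi.single_eq_same, Pi.single_apply, ι.injective.eq_iff] at this
  by_contra hne
  simp [hne] at this

def matchingBlock (v : V) : Set (F2 d) := insert 0 (edgeVec ι '' {e | v ∈ (e : Sym2 V)})

def perfectMatchingBlock (v : V) : Set (F2 d) := edgeVec ι '' {e | v ∈ (e : Sym2 V)}

variable {ι}

theorem mem_of_mem_matchingBlock {v : V} {e : G.edgeSet} (h : edgeVec ι e ∈ matchingBlock ι v) :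
    v ∈ (e : Sym2 V) := by
  rcases h with h | ⟨e', he', h⟩
  · exact absurd h (edgeVec_ne_zero ι e)
  · rwa [← edgeVec_injective ι h]

theorem apply_of_mem_matchingBlock {a : F2 d} {v : V} (h : a ∈ matchingBlock ι v)
    (e : G.edgeSet) : a (ι e) = if a = edgeVec ι e then 1 else 0 := by
  rcases h with rfl | ⟨e', -, rfl⟩
  · simp [(edgeVec_ne_zero ι e).symm]
  · simp only [(edgeVec_injective ι).eq_iff]
    simp [edgeVec, Pi.single_apply, ι.injective.eq_iff, eq_comm]

variable (ι) in
def EndpointsAgree (ζ : V → F2 d) : Prop :=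
  ∀ e : G.edgeSet, ∀ u ∈ (e : Sym2 V), ∀ w ∈ (e : Sym2 V), ζ u = edgeVec ι e → ζ w = edgeVec ι e

theorem sum_eq_zero_iff_endpointsAgree [Fintype V] {ζ : V → F2 d}
    (hζ : ∀ v, ζ v ∈ matchingBlock ι v) :
    ∑ v, ζ v = 0 ↔ EndpointsAgree ι ζ := by
  have coord : ∀ (e : G.edgeSet) (u w : V), (e : Sym2 V) = s(u, w) →
      ((∑ v, ζ v) (ι e) = 0 ↔ (ζ u = edgeVec ι e ↔ ζ w = edgeVec ι e)) := by
    intro e u w he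
    have huw : u ≠ w := G.ne_of_adj (by rw [← SimpleGraph.mem_edgeSet, ← he]; exact e.2)
    rw [Finset.sum_apply, Fintype.sum_eq_add u w huw, apply_of_mem_matchingBlock (hζ u),
      apply_of_mem_matchingBlock (hζ w), ZMod.boole_add_boole_eq_zero_iff]
    rintro v ⟨hvu, hvw⟩
    rw [apply_of_mem_matchingBlock (hζ v), if_neg]
    intro h
    have hv := mem_of_mem_matchingBlock (h ▸ hζ v)
    rw [he, Sym2.mem_iff] at hv
    tauto
  constructor
  · intro hsum e u hu w hw hue
    obtain ⟨u', he⟩ := Sym2.mem_iff_exists.mp hu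
    rw [he, Sym2.mem_iff] at hw
    rcases hw with rfl | rfl
    · exact hue
    · exact ((coord e u _ he).mp (by rw [hsum]; rfl)).mp hue
  · intro hagree
    funext j
    obtain ⟨e, rfl⟩ := ι.surjective j
    obtain ⟨⟨u, w⟩, he⟩ := Quot.exists_rep (e : Sym2 V)
    have hu : u ∈ (e : Sym2 V) := he ▸ Sym2.mem_mk_left u w
    have hw : w ∈ (e : Sym2 V) := he ▸ Sym2.mem_mk_right u w
    exact (coord e u w he.symm).mpr ⟨hagree e u hu w hw, hagree e w hw u hu⟩

variable (G) [DecidableEq V] in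
def matchingIndicators : Set (G.edgeSet → ℝ) :=
  { x | ∃ M : Finset (Sym2 V), ↑M ⊆ G.edgeSet ∧
      (∀ e₁ ∈ M, ∀ e₂ ∈ M, e₁ ≠ e₂ → ∀ v : V, v ∈ e₁ → v ∉ e₂) ∧
      x = fun e : G.edgeSet => if (e : Sym2 V) ∈ M then (1 : ℝ) else 0 }

variable (G) [DecidableEq V] in
def perfectMatchingIndicators : Set (G.edgeSet → ℝ) :=
  { x | ∃ M : Finset (Sym2 V), ↑M ⊆ G.edgeSet ∧
      (∀ e₁ ∈ M, ∀ e₂ ∈ M, e₁ ≠ e₂ → ∀ v : V, v ∈ e₁ → v ∉ e₂) ∧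
      (∀ v : V, ∃ e ∈ M, v ∈ e) ∧
      x = fun e : G.edgeSet => if (e : Sym2 V) ∈ M then (1 : ℝ) else 0 }

theorem perfectMatchingIndicators_eq_empty [DecidableEq V] {v : V}
    (hv : ∀ e : G.edgeSet, v ∉ (e : Sym2 V)) :
    perfectMatchingIndicators G = ∅ := by
  refine Set.eq_empty_iff_forall_notMem.mpr ?_
  rintro x ⟨M, hMsub, -, hcover, -⟩
  obtain ⟨e, he, hve⟩ := hcover v
  exact hv ⟨e, hMsub he⟩ hve

variable (ι) in
noncomputable def labellingOf (M : Finset (Sym2 V)) (v : V) : F2 d :=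
  if h : ∃ e : G.edgeSet, ↑e ∈ M ∧ v ∈ (e : Sym2 V) then edgeVec ι h.choose else 0

section labellingOf

variable {M : Finset (Sym2 V)}
  (hM : ∀ e₁ ∈ M, ∀ e₂ ∈ M, e₁ ≠ e₂ → ∀ v : V, v ∈ e₁ → v ∉ e₂)
include hM

theorem labellingOf_eq_edgeVec_iff {v : V} {e : G.edgeSet} :
    labellingOf ι M v = edgeVec ι e ↔ ↑e ∈ M ∧ v ∈ (e : Sym2 V) := by
  unfold labellingOf
  split_ifs with h
  · rw [(edgeVec_injective ι).eq_iff]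
    refine ⟨fun he => he ▸ h.choose_spec, fun ⟨heM, hv⟩ => ?_⟩
    by_contra hne
    exact hM _ h.choose_spec.1 _ heM (fun h' => hne (Subtype.ext h')) v h.choose_spec.2 hv
  · exact ⟨fun h0 => absurd h0.symm (edgeVec_ne_zero ι e), fun ⟨heM, hv⟩ => absurd ⟨e, heM, hv⟩ h⟩

theorem endpointsAgree_labellingOf : EndpointsAgree ι (labellingOf ι M) := by
  intro e u _ w hw
  simp only [labellingOf_eq_edgeVec_iff hM]
  exact fun h => ⟨h.1, hw⟩

end labellingOf

theorem labellingOf_mem_matchingBlock (M : Finset (Sym2 V)) (v : V) :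
    labellingOf ι M v ∈ matchingBlock ι v := by
  unfold labellingOf
  split_ifs with h
  · exact Set.mem_insert_of_mem _ ⟨_, h.choose_spec.2, rfl⟩
  · exact Set.mem_insert _ _

theorem labellingOf_mem_perfectMatchingBlock {M : Finset (Sym2 V)} (hMsub : ↑M ⊆ G.edgeSet)
    {v : V} (hv : ∃ e ∈ M, v ∈ e) : labellingOf ι M v ∈ perfectMatchingBlock ι v := by
  obtain ⟨s, hsM, hvs⟩ := hv
  have h : ∃ e : G.edgeSet, ↑e ∈ M ∧ v ∈ (e : Sym2 V) := ⟨⟨s, hMsub hsM⟩, hsM, hvs⟩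
  rw [labellingOf, dif_pos h]
  exact ⟨_, h.choose_spec.2, rfl⟩

variable [Fintype V] {n : ℕ} (κ : V ≃ Fin n)

theorem IsCyclicTransversal.endpointsAgree {ξ : Fin n → F2 d}
    (h : IsCyclicTransversal (fun i => matchingBlock ι (κ.symm i)) ξ) :
    EndpointsAgree ι (ξ ∘ κ) := by
  refine (sum_eq_zero_iff_endpointsAgree fun v => by simpa using h.1 (κ v)).mp ?_
  rw [← h.2]
  exact κ.sum_comp ξ

theorem isCyclicTransversal_labellingOf {M : Finset (Sym2 V)}
    (hM : ∀ e₁ ∈ M, ∀ e₂ ∈ M, e₁ ≠ e₂ → ∀ v : V, v ∈ e₁ → v ∉ e₂) :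
    IsCyclicTransversal (fun i => matchingBlock ι (κ.symm i)) (labellingOf ι M ∘ κ.symm) := by
  refine ⟨fun i => labellingOf_mem_matchingBlock M _, ?_⟩
  rw [← (sum_eq_zero_iff_endpointsAgree (labellingOf_mem_matchingBlock M)).mpr
    (endpointsAgree_labellingOf hM)]
  exact κ.symm.sum_comp (labellingOf ι M)

variable [DecidableEq V] [DecidableRel G.Adj]

variable (ι) in
def matchingOf (ζ : V → F2 d) : Finset (Sym2 V) :=
  (Finset.univ.filter fun e : G.edgeSet => ∃ v ∈ (e : Sym2 V), ζ v = edgeVec ι e).map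
    (Function.Embedding.subtype _)

theorem coe_matchingOf_subset (ζ : V → F2 d) : ↑(matchingOf ι ζ) ⊆ G.edgeSet := by
  intro s hs
  obtain ⟨e, -, rfl⟩ := Finset.mem_map.mp hs
  exact e.2

theorem coe_mem_matchingOf {ζ : V → F2 d} {e : G.edgeSet} :
    ↑e ∈ matchingOf ι ζ ↔ ∃ v ∈ (e : Sym2 V), ζ v = edgeVec ι e := by
  simp [matchingOf]

theorem coe_mem_matchingOf_iff_of_endpointsAgree {ζ : V → F2 d} (h : EndpointsAgree ι ζ)
    {e : G.edgeSet} {v : V} (hv : v ∈ (e : Sym2 V)) :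
    ↑e ∈ matchingOf ι ζ ↔ ζ v = edgeVec ι e := by
  rw [coe_mem_matchingOf]
  exact ⟨fun ⟨u, hu, hue⟩ => h e u hu v hv hue, fun hve => ⟨v, hv, hve⟩⟩

theorem matchingOf_pairwise {ζ : V → F2 d} (h : EndpointsAgree ι ζ) :
    ∀ e₁ ∈ matchingOf ι ζ, ∀ e₂ ∈ matchingOf ι ζ, e₁ ≠ e₂ → ∀ v : V, v ∈ e₁ → v ∉ e₂ := by
  intro s₁ hs₁ s₂ hs₂ hne v hv₁ hv₂
  obtain ⟨e₁, -, rfl⟩ := Finset.mem_map.mp hs₁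
  obtain ⟨e₂, -, rfl⟩ := Finset.mem_map.mp hs₂
  have h₁ := (coe_mem_matchingOf_iff_of_endpointsAgree h hv₁).mp hs₁
  have h₂ := (coe_mem_matchingOf_iff_of_endpointsAgree h hv₂).mp hs₂
  exact hne (congrArg Subtype.val (edgeVec_injective ι (h₁.symm.trans h₂)))

theorem matchingOf_covers {ζ : V → F2 d} (hζ : ∀ v, ζ v ∈ perfectMatchingBlock ι v) (v : V) :
    ∃ e ∈ matchingOf ι ζ, v ∈ e := by
  obtain ⟨e, hv, he⟩ := hζ v
  exact ⟨e, coe_mem_matchingOf.mpr ⟨v, hv, he.symm⟩, hv⟩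

theorem matchingOf_labellingOf {M : Finset (Sym2 V)} (hMsub : ↑M ⊆ G.edgeSet)
    (hM : ∀ e₁ ∈ M, ∀ e₂ ∈ M, e₁ ≠ e₂ → ∀ v : V, v ∈ e₁ → v ∉ e₂) :
    matchingOf ι (labellingOf ι M) = M := by
  ext s
  constructor
  · intro hs
    obtain ⟨e, -, rfl⟩ := Finset.mem_map.mp hs
    obtain ⟨v, -, hv⟩ := coe_mem_matchingOf.mp hs
    exact ((labellingOf_eq_edgeVec_iff hM).mp hv).1
  · intro hs
    let e : G.edgeSet := ⟨s, hMsub hs⟩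
    exact coe_mem_matchingOf (e := e) |>.mpr
      ⟨_, Sym2.out_fst_mem s, (labellingOf_eq_edgeVec_iff hM).mpr ⟨hs, Sym2.out_fst_mem s⟩⟩

theorem ncard_setOf_mem_edge (v : V) :
    {e : G.edgeSet | v ∈ (e : Sym2 V)}.ncard = G.degree v := by
  have himage : Subtype.val '' {e : G.edgeSet | v ∈ (e : Sym2 V)} = G.incidenceSet v := by
    ext s
    simp [SimpleGraph.incidenceSet, and_comm]
  rw [← Set.ncard_image_of_injective _ Subtype.val_injective, himage, ← Nat.card_coe_set_eq,
    Nat.card_eq_fintype_card, SimpleGraph.card_incidenceSet_eq_degree]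

theorem ncard_matchingBlock (v : V) : (matchingBlock ι v).ncard = G.degree v + 1 := by
  rw [matchingBlock, Set.ncard_insert_of_notMem, Set.ncard_image_of_injective _
    (edgeVec_injective ι), ncard_setOf_mem_edge]
  rintro ⟨e, -, he⟩
  exact edgeVec_ne_zero ι e he

theorem ncard_perfectMatchingBlock (v : V) : (perfectMatchingBlock ι v).ncard = G.degree v := by
  rw [perfectMatchingBlock, Set.ncard_image_of_injective _ (edgeVec_injective ι),
    ncard_setOf_mem_edge]

theorem blockSize_matchingBlock :
    blockSize (fun i => matchingBlock ι (κ.symm i)) = Fintype.card V + 2 * G.edgeFinset.card := by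
  simp only [blockSize, ncard_matchingBlock]
  rw [κ.symm.sum_comp (fun v => G.degree v + 1), Finset.sum_add_distrib,
    G.sum_degrees_eq_twice_card_edges, Finset.sum_const, Finset.card_univ, smul_eq_mul, mul_one,
    add_comm]

theorem blockSize_perfectMatchingBlock :
    blockSize (fun i => perfectMatchingBlock ι (κ.symm i)) = 2 * G.edgeFinset.card := by
  simp only [blockSize, ncard_perfectMatchingBlock]
  rw [κ.symm.sum_comp (fun v => G.degree v), G.sum_degrees_eq_twice_card_edges]


variable (ι) in
-- Which endpoint of `e` is read does not matter: both endpoints of a chosen edge choose it.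
noncomputable def edgeCoords : (Fin n → F2 d → ℝ) →ₗ[ℝ] (G.edgeSet → ℝ) :=
  LinearMap.pi fun e => LinearMap.proj (edgeVec ι e) ∘ₗ LinearMap.proj (κ (e : Sym2 V).out.1)

theorem edgeCoords_incVec {ξ : Fin n → F2 d} (h : EndpointsAgree ι (ξ ∘ κ)) :
    edgeCoords ι κ (incVec ξ) =
      fun e : G.edgeSet => if (e : Sym2 V) ∈ matchingOf ι (ξ ∘ κ) then (1 : ℝ) else 0 := by
  funext e
  simp [edgeCoords, incVec, coe_mem_matchingOf_iff_of_endpointsAgree h (Sym2.out_fst_mem _)]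

variable (ι) in
def edgeLabelling (e : G.edgeSet) : Fin n → F2 d :=
  fun i => if κ.symm i ∈ (e : Sym2 V) then edgeVec ι e else 0

variable (ι) in
noncomputable def ofEdgeCoords : (G.edgeSet → ℝ) →ᵃ[ℝ] (Fin n → F2 d → ℝ) :=
  (Fintype.linearCombination ℝ fun e => incVec (edgeLabelling ι κ e) - incVec 0).toAffineMap +
    AffineMap.const ℝ _ (incVec 0)

theorem ofEdgeCoords_apply (y : G.edgeSet → ℝ) :
    ofEdgeCoords ι κ y = ∑ e, y e • (incVec (edgeLabelling ι κ e) - incVec 0) + incVec 0 :=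
  rfl

theorem ofEdgeCoords_edgeCoords_incVec {ξ : Fin n → F2 d}
    (h : IsCyclicTransversal (fun i => matchingBlock ι (κ.symm i)) ξ) :
    ofEdgeCoords ι κ (edgeCoords ι κ (incVec ξ)) = incVec ξ := by
  rw [edgeCoords_incVec κ h.endpointsAgree, ofEdgeCoords_apply]
  funext i ω
  simp only [Pi.add_apply, Finset.sum_apply, Pi.smul_apply, Pi.sub_apply, smul_eq_mul]
  have hterm : ∀ e : G.edgeSet,
      (if (e : Sym2 V) ∈ matchingOf ι (ξ ∘ κ) then 1 else 0 : ℝ) *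
        (incVec (edgeLabelling ι κ e) i ω - incVec 0 i ω) =
      if ξ i = edgeVec ι e then incVec (fun _ => edgeVec ι e) i ω - incVec 0 i ω else 0 := by
    intro e
    by_cases hi : κ.symm i ∈ (e : Sym2 V)
    · simp only [coe_mem_matchingOf_iff_of_endpointsAgree h.endpointsAgree hi]
      simp [incVec, edgeLabelling, hi]
    · have hne : ξ i ≠ edgeVec ι e := fun he => hi (mem_of_mem_matchingBlock (he ▸ h.1 i))
      simp [incVec, edgeLabelling, hi, hne]
  rw [Finset.sum_congr rfl fun e _ => hterm e]
  rcases h.1 i with h0 | ⟨e₀, -, he₀⟩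
  · simp [h0, incVec, (edgeVec_ne_zero ι _).symm]
  · simp only [← he₀, (edgeVec_injective ι).eq_iff, Finset.sum_ite_eq, Finset.mem_univ, if_true]
    simp [incVec, he₀]

theorem affIso_CTP_of_edgeCoords_image {B : Fin n → Set (F2 d)}
    (hB : ∀ i, B i ⊆ matchingBlock ι (κ.symm i)) {S : Set (G.edgeSet → ℝ)}
    (hS : edgeCoords ι κ '' (incVec '' {ξ | IsCyclicTransversal B ξ}) = S) :
    AffIso (CTP B) (convexHull ℝ S) :=
  affIso_convexHull_of_leftInverseOn (edgeCoords ι κ).toAffineMap (ofEdgeCoords ι κ) hS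
    (by rintro _ ⟨ξ, hξ, rfl⟩; exact ofEdgeCoords_edgeCoords_incVec κ (hξ.mono hB))

theorem edgeCoords_incVec_labellingOf {M : Finset (Sym2 V)} (hMsub : ↑M ⊆ G.edgeSet)
    (hM : ∀ e₁ ∈ M, ∀ e₂ ∈ M, e₁ ≠ e₂ → ∀ v : V, v ∈ e₁ → v ∉ e₂) :
    edgeCoords ι κ (incVec (labellingOf ι M ∘ κ.symm)) =
      fun e : G.edgeSet => if (e : Sym2 V) ∈ M then (1 : ℝ) else 0 := by
  rw [edgeCoords_incVec κ (isCyclicTransversal_labellingOf κ hM).endpointsAgree]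
  simp [Function.comp_def, matchingOf_labellingOf hMsub hM]

theorem edgeCoords_image_matchingBlock :
    edgeCoords ι κ '' (incVec '' {ξ | IsCyclicTransversal (fun i => matchingBlock ι (κ.symm i)) ξ})
      = matchingIndicators G := by
  ext x
  constructor
  · rintro ⟨_, ⟨ξ, hξ, rfl⟩, rfl⟩
    exact ⟨matchingOf ι (ξ ∘ κ), coe_matchingOf_subset _,
      matchingOf_pairwise hξ.endpointsAgree, edgeCoords_incVec κ hξ.endpointsAgree⟩
  · rintro ⟨M, hMsub, hM, rfl⟩
    exact ⟨_, ⟨_, isCyclicTransversal_labellingOf κ hM, rfl⟩,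
      edgeCoords_incVec_labellingOf κ hMsub hM⟩

theorem edgeCoords_image_perfectMatchingBlock :
    edgeCoords ι κ ''
      (incVec '' {ξ | IsCyclicTransversal (fun i => perfectMatchingBlock ι (κ.symm i)) ξ})
      = perfectMatchingIndicators G := by
  ext x
  constructor
  · rintro ⟨_, ⟨ξ, hξ, rfl⟩, rfl⟩
    have hξ' := hξ.mono (B' := fun i => matchingBlock ι (κ.symm i)) fun i => Set.subset_insert _ _
    exact ⟨matchingOf ι (ξ ∘ κ), coe_matchingOf_subset _,
      matchingOf_pairwise hξ'.endpointsAgree,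
      matchingOf_covers (fun v => by simpa using hξ.1 (κ v)),
      edgeCoords_incVec κ hξ'.endpointsAgree⟩
  · rintro ⟨M, hMsub, hM, hcover, rfl⟩
    refine ⟨_, ⟨_, ⟨fun i => ?_, (isCyclicTransversal_labellingOf κ hM).2⟩, rfl⟩,
      edgeCoords_incVec_labellingOf κ hMsub hM⟩
    exact labellingOf_mem_perfectMatchingBlock hMsub (hcover _)

end MatchingTransversals

/-- matching and perfect matching polytopes are CTPs. -/
theorem statement3 (V : Type) [Fintype V] [DecidableEq V] (G : SimpleGraph V)
    [DecidableRel G.Adj] (hE : G.edgeFinset.Nonempty) :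
    (∃ d n : ℕ, 1 ≤ d ∧ 2 ≤ n ∧ ∃ B : Fin n → Set (F2 d),
      (∀ i, (B i).Nonempty) ∧
      blockSize B = Fintype.card V + 2 * G.edgeFinset.card ∧
      AffIso (CTP B)
        (convexHull ℝ { x : G.edgeSet → ℝ | ∃ M : Finset (Sym2 V),
          ↑M ⊆ G.edgeSet ∧
          (∀ e₁ ∈ M, ∀ e₂ ∈ M, e₁ ≠ e₂ → ∀ v : V, v ∈ e₁ → v ∉ e₂) ∧
          x = fun e : G.edgeSet => if (e : Sym2 V) ∈ M then (1 : ℝ) else 0 })) ∧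
    (∃ d n : ℕ, 1 ≤ d ∧ 2 ≤ n ∧ ∃ B : Fin n → Set (F2 d),
      (∀ i, (B i).Nonempty) ∧
      blockSize B = 2 * G.edgeFinset.card ∧
      AffIso (CTP B)
        (convexHull ℝ { x : G.edgeSet → ℝ | ∃ M : Finset (Sym2 V),
          ↑M ⊆ G.edgeSet ∧
          (∀ e₁ ∈ M, ∀ e₂ ∈ M, e₁ ≠ e₂ → ∀ v : V, v ∈ e₁ → v ∉ e₂) ∧
          (∀ v : V, ∃ e ∈ M, v ∈ e) ∧
          x = fun e : G.edgeSet => if (e : Sym2 V) ∈ M then (1 : ℝ) else 0 })) := by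
  have hV : 2 ≤ Fintype.card V := by
    obtain ⟨e, he⟩ := hE
    induction e using Sym2.ind with
    | _ u w => exact Fintype.one_lt_card_iff.mpr ⟨u, w, G.ne_of_adj (G.mem_edgeFinset.mp he)⟩
  have hd : 1 ≤ G.edgeFinset.card := hE.card_pos
  let ι : G.edgeSet ≃ Fin G.edgeFinset.card := Fintype.equivFinOfCardEq G.edgeFinset_card.symm
  let κ := Fintype.equivFin V
  refine ⟨⟨_, _, hd, hV, _, fun _ => ⟨0, Set.mem_insert _ _⟩, blockSize_matchingBlock (ι := ι) κ,
    affIso_CTP_of_edgeCoords_image κ (fun _ => subset_rfl) (edgeCoords_image_matchingBlock κ)⟩, ?_⟩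
  by_cases hcover : ∀ v, ∃ e : G.edgeSet, v ∈ (e : Sym2 V)
  · refine ⟨_, _, hd, hV, _, fun i => ?_, blockSize_perfectMatchingBlock (ι := ι) κ,
      affIso_CTP_of_edgeCoords_image κ (fun _ => Set.subset_insert _ _)
        (edgeCoords_image_perfectMatchingBlock κ)⟩
    obtain ⟨e, he⟩ := hcover (κ.symm i)
    exact ⟨_, e, he, rfl⟩
  · push Not at hcover
    obtain ⟨v, hv⟩ := hcover
    obtain ⟨B, hB, hsize, hCTP⟩ :=
      exists_blockSize_eq_CTP_eq_empty (2 * G.edgeFinset.card) (by omega)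
    refine ⟨_, _, by omega, by omega, B, hB, hsize, ?_⟩
    show AffIso (CTP B) (convexHull ℝ (perfectMatchingIndicators G))
    rw [hCTP, perfectMatchingIndicators_eq_empty hv, convexHull_empty]
    exact ⟨AffineMap.const ℝ _ 0, Set.injOn_empty _, Set.image_empty _⟩
end

section
/- Let B be a block configuration in 𝔽₂^d and P := CTP[B]. If the number of extreme points (vertices) of P is not a power of two (i.e., there is no k ∈ ℕ with |extreme points of P| = 2^k), then every pair of vertices of P is contained in a common proper exposed face of P: for all extreme points v, w of P there exist a linear functional c on ℝ^B and β ∈ ℝ such that c·x ≥ β for all x ∈ P, the face F := {x ∈ P : c·x = β} satisfies F ≠ P, and v ∈ F and w ∈ F. -/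
open scoped Classical

/-!
Every vertex of `CTP B` is the incidence vector of a cyclic transversal, and all these vectors
lie in the unit cube. For vertices `ξ`, `ζ`, the sum of the coordinates `x i ω` with
`ω ∉ {ξ i, ζ i}` is nonnegative on `CTP B` and vanishes at both, so it exposes a face containing
them. If that face were all of `CTP B`, every cyclic transversal `χ` would satisfy
`χ i ∈ {ξ i, ζ i}`; then `χ ↦ χ - ζ` maps the cyclic transversals onto the vectors `y` with
`y i ∈ {0, ξ i - ζ i}` and `∑ y i = 0`, which form an `𝔽₂`-subspace, so there would be a
power of two of them.
-/

open Finset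

section CharTwo

variable {ι M : Type*} [Fintype ι] [AddCommGroup M] [Module (ZMod 2) M]

def switchSubmodule (δ : ι → M) : Submodule (ZMod 2) (ι → M) where
  carrier := {y | (∀ i, y i = 0 ∨ y i = δ i) ∧ ∑ i, y i = 0}
  zero_mem' := ⟨fun _ => Or.inl rfl, by simp⟩
  add_mem' := by
    rintro y z ⟨hy, hy_sum⟩ ⟨hz, hz_sum⟩
    refine ⟨fun i => ?_, by simp [Finset.sum_add_distrib, hy_sum, hz_sum]⟩
    rcases hy i with h | h <;> rcases hz i with h' | h' <;>
      simp [h, h', ZModModule.add_self]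
  smul_mem' := by
    intro c y hy
    rcases (by decide : ∀ a : ZMod 2, a = 0 ∨ a = 1) c with rfl | rfl
    · exact ⟨fun _ => Or.inl (by simp), by simp⟩
    · simpa using hy

theorem sub_mem_switchSubmodule_iff {ξ ζ χ : ι → M} (hζ : ∑ i, ζ i = 0) :
    χ - ζ ∈ switchSubmodule (ξ - ζ) ↔ (∀ i, χ i = ξ i ∨ χ i = ζ i) ∧ ∑ i, χ i = 0 := by
  simp only [switchSubmodule, Submodule.mem_mk, AddSubmonoid.mem_mk, AddSubsemigroup.mem_mk,
    Set.mem_ofPred_eq, Pi.sub_apply, sub_eq_zero, sub_left_inj, Finset.sum_sub_distrib, hζ]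
  exact and_congr_left' (forall_congr' fun _ => or_comm)

theorem exists_ncard_setOf_forall_eq_or_eq_eq_two_pow [Finite M] (ξ : ι → M) {ζ : ι → M}
    (hζ : ∑ i, ζ i = 0) :
    ∃ k, {χ : ι → M | (∀ i, χ i = ξ i ∨ χ i = ζ i) ∧ ∑ i, χ i = 0}.ncard = 2 ^ k := by
  have hset : {χ : ι → M | (∀ i, χ i = ξ i ∨ χ i = ζ i) ∧ ∑ i, χ i = 0} =
      Equiv.subRight ζ ⁻¹' switchSubmodule (ξ - ζ) := by
    ext χ
    exact (sub_mem_switchSubmodule_iff hζ).symm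
  refine ⟨Module.finrank (ZMod 2) (switchSubmodule (ξ - ζ)), ?_⟩
  rw [hset, Set.ncard_preimage_of_injective_subset_range (Equiv.injective _) (by simp),
    ← Nat.card_coe_set_eq, SetLike.coe_sort_coe, Module.natCard_eq_pow_finrank (K := ZMod 2),
    Nat.card_zmod]

end CharTwo

section UnitCube

variable {ι κ : Type*}

def unitCube (ι κ : Type*) : Set (ι → κ → ℝ) :=
  Set.univ.pi fun _ => Set.univ.pi fun _ => Set.Icc 0 1

theorem convex_unitCube : Convex ℝ (unitCube ι κ) :=
  convex_pi fun _ _ => convex_pi fun _ _ => convex_Icc 0 1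

theorem mem_extremePoints_unitCube {x : ι → κ → ℝ} (hx : ∀ i ω, x i ω = 0 ∨ x i ω = 1) :
    x ∈ Set.extremePoints ℝ (unitCube ι κ) := by
  simp only [unitCube, extremePoints_pi, Set.extremePoints_Icc zero_le_one, Set.mem_univ_pi,
    Set.mem_insert_iff, Set.mem_singleton_iff]
  exact hx

variable [Fintype ι] [Fintype κ]

noncomputable def offPairSum (ξ ζ : ι → κ) : (ι → κ → ℝ) →ₗ[ℝ] ℝ :=
  ∑ i, ∑ ω ∈ ({ξ i, ζ i} : Finset κ)ᶜ, LinearMap.proj ω ∘ₗ LinearMap.proj i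

theorem offPairSum_apply (ξ ζ : ι → κ) (x : ι → κ → ℝ) :
    offPairSum ξ ζ x = ∑ i, ∑ ω ∈ ({ξ i, ζ i} : Finset κ)ᶜ, x i ω := by
  simp [offPairSum]

theorem offPairSum_nonneg_of_mem_unitCube (ξ ζ : ι → κ) {x : ι → κ → ℝ}
    (hx : x ∈ unitCube ι κ) : 0 ≤ offPairSum ξ ζ x := by
  rw [offPairSum_apply]
  exact Finset.sum_nonneg fun i _ => Finset.sum_nonneg fun ω _ =>
    (hx i (Set.mem_univ _) ω (Set.mem_univ _)).1

end UnitCube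

section CyclicTransversalPolytope

variable {d n : ℕ}

theorem incVec_injective : Function.Injective (incVec : (Fin n → F2 d) → Fin n → F2 d → ℝ) := by
  intro ξ ζ h
  funext i
  by_contra hne
  have h_at : incVec ζ i (ξ i) = 1 := by
    rw [← h]
    simp [incVec]
  simp only [incVec, ite_eq_left_iff, zero_ne_one, imp_false, not_not] at h_at
  exact hne h_at.symm

theorem incVec_eq_zero_or_eq_one (ξ : Fin n → F2 d) (i : Fin n) (ω : F2 d) :
    incVec ξ i ω = 0 ∨ incVec ξ i ω = 1 := by
  unfold incVec
  split_ifs <;> simp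

theorem CTP_subset_unitCube (B : Fin n → Set (F2 d)) : CTP B ⊆ unitCube (Fin n) (F2 d) := by
  refine convexHull_min ?_ convex_unitCube
  rintro _ ⟨ξ, -, rfl⟩ i - ω -
  rcases incVec_eq_zero_or_eq_one ξ i ω with h | h <;> simp [h]

theorem extremePoints_CTP (B : Fin n → Set (F2 d)) :
    Set.extremePoints ℝ (CTP B) = incVec '' {ξ | IsCyclicTransversal B ξ} := by
  refine extremePoints_convexHull_subset.antisymm ?_
  rintro _ ⟨ξ, hξ, rfl⟩
  exact inter_extremePoints_subset_extremePoints_of_subset (CTP_subset_unitCube B)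
    ⟨subset_convexHull ℝ _ ⟨ξ, hξ, rfl⟩,
      mem_extremePoints_unitCube (incVec_eq_zero_or_eq_one ξ)⟩

theorem ncard_extremePoints_CTP (B : Fin n → Set (F2 d)) :
    (Set.extremePoints ℝ (CTP B)).ncard = {ξ | IsCyclicTransversal B ξ}.ncard := by
  rw [extremePoints_CTP, Set.ncard_image_of_injective _ incVec_injective]

theorem exists_ncard_cyclicTransversals_eq_two_pow {B : Fin n → Set (F2 d)}
    {ξ ζ : Fin n → F2 d} (hξ : IsCyclicTransversal B ξ) (hζ : IsCyclicTransversal B ζ)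
    (hall : ∀ χ, IsCyclicTransversal B χ → ∀ i, χ i = ξ i ∨ χ i = ζ i) :
    ∃ k, {χ | IsCyclicTransversal B χ}.ncard = 2 ^ k := by
  have hset : {χ | IsCyclicTransversal B χ} =
      {χ | (∀ i, χ i = ξ i ∨ χ i = ζ i) ∧ ∑ i, χ i = 0} := by
    ext χ
    refine ⟨fun hχ => ⟨hall χ hχ, hχ.2⟩, ?_⟩
    rintro ⟨hpair, hsum⟩
    refine ⟨fun i => ?_, hsum⟩
    rcases hpair i with h | h <;> rw [h]
    exacts [hξ.1 i, hζ.1 i]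
  rw [hset]
  exact exists_ncard_setOf_forall_eq_or_eq_eq_two_pow ξ hζ.2

theorem offPairSum_incVec (ξ ζ χ : Fin n → F2 d) :
    offPairSum ξ ζ (incVec χ) = #{i | χ i ≠ ξ i ∧ χ i ≠ ζ i} := by
  simp [offPairSum_apply, incVec, Finset.sum_ite_eq, Finset.sum_boole]

theorem offPairSum_incVec_eq_zero_iff {ξ ζ χ : Fin n → F2 d} :
    offPairSum ξ ζ (incVec χ) = 0 ↔ ∀ i, χ i = ξ i ∨ χ i = ζ i := by
  rw [offPairSum_incVec]
  simp [Finset.filter_eq_empty_iff, or_iff_not_and_not]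

end CyclicTransversalPolytope

theorem statement4_general (d n : ℕ) (B : Fin n → Set (F2 d))
    (hcard : ¬ ∃ k : ℕ, (Set.extremePoints ℝ (CTP B)).ncard = 2 ^ k) :
    ∀ v ∈ Set.extremePoints ℝ (CTP B), ∀ w ∈ Set.extremePoints ℝ (CTP B),
      ∃ (c : (Fin n → F2 d → ℝ) →ₗ[ℝ] ℝ) (β : ℝ),
        (∀ x ∈ CTP B, β ≤ c x) ∧
        { x ∈ CTP B | c x = β } ≠ CTP B ∧
        c v = β ∧ c w = β := by
  intro v hv w hw
  rw [extremePoints_CTP] at hv hw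
  obtain ⟨ξ, hξ, rfl⟩ := hv
  obtain ⟨ζ, hζ, rfl⟩ := hw
  refine ⟨offPairSum ξ ζ, 0, fun x hx => offPairSum_nonneg_of_mem_unitCube ξ ζ
    (CTP_subset_unitCube B hx), fun hface => hcard ?_,
    offPairSum_incVec_eq_zero_iff.2 fun _ => Or.inl rfl,
    offPairSum_incVec_eq_zero_iff.2 fun _ => Or.inr rfl⟩
  rw [ncard_extremePoints_CTP]
  refine exists_ncard_cyclicTransversals_eq_two_pow hξ hζ fun χ hχ => ?_
  have hχ_face : incVec χ ∈ {x ∈ CTP B | offPairSum ξ ζ x = 0} := by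
    rw [hface]
    exact subset_convexHull ℝ _ ⟨χ, hχ, rfl⟩
  exact offPairSum_incVec_eq_zero_iff.1 hχ_face.2

/-- if the number of vertices of a CTP is not a power of two, then every
pair of vertices lies in a common proper exposed face. -/
theorem statement4 (d n : ℕ) (hn : 2 ≤ n) (B : Fin n → Set (F2 d)) (hB : ∀ i, (B i).Nonempty)
    (hcard : ¬ ∃ k : ℕ, (Set.extremePoints ℝ (CTP B)).ncard = 2 ^ k) :
    ∀ v ∈ Set.extremePoints ℝ (CTP B), ∀ w ∈ Set.extremePoints ℝ (CTP B),
      ∃ (c : (Fin n → F2 d → ℝ) →ₗ[ℝ] ℝ) (β : ℝ),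
        (∀ x ∈ CTP B, β ≤ c x) ∧
        { x ∈ CTP B | c x = β } ≠ CTP B ∧
        c v = β ∧ c w = β :=
  statement4_general d n B hcard
end

section
/- For all d ≥ 1 and n ≥ 3, the affine hull (affine span over ℝ) of the full cyclic transversal polytope CTP[d,n] is exactly the affine subspace { x ∈ ℝ^{B(d,n)} : Σ_{ω ∈ 𝔽₂^d} x^i_ω = 1 for every i ∈ [n] } described by the n transversal equations. -/
open scoped Classical

/-! Every incidence vector satisfies the transversal equations. Conversely, write
`g i ω := incVec (Pi.single i ω) - incVec 0`. For `i ≠ j` the transversal with `ω` in positions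
`i` and `j` and `0` elsewhere is cyclic, and its incidence vector minus that of the zero
transversal is `g i ω + g j ω`. As `n ≥ 3`, every `i` has two distinct partners `j`, `k`, and
`g i ω = ½ ((g i ω + g j ω) + (g i ω + g k ω) - (g j ω + g k ω))` lies in the direction of the
affine span. A point `x` satisfying the transversal equations is
`incVec 0 + ∑ i, ∑ ω, x i ω • g i ω`. -/

theorem Submodule.mem_of_add_mem_of_add_mem_of_add_mem {R M : Type*} [Ring R] [Invertible (2 : R)]
    [AddCommGroup M] [Module R M] {p : Submodule R M} {a b c : M}
    (hab : a + b ∈ p) (hac : a + c ∈ p) (hbc : b + c ∈ p) : a ∈ p := by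
  have h : a = ⅟(2 : R) • ((a + b) + (a + c) - (b + c)) := by
    rw [show (a + b) + (a + c) - (b + c) = (2 : R) • a by rw [two_smul]; abel, smul_smul,
      invOf_mul_self, one_smul]
  rw [h]
  exact p.smul_mem _ (p.sub_mem (p.add_mem hab hac) hbc)

theorem exists_ne_ne_of_two_lt_card {α : Type*} [Fintype α] (h : 2 < Fintype.card α) (a : α) :
    ∃ b c : α, a ≠ b ∧ a ≠ c ∧ b ≠ c := by
  have : 1 < (Finset.univ.erase a).card := by
    rw [Finset.card_erase_of_mem (Finset.mem_univ a), Finset.card_univ]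
    omega
  obtain ⟨b, hb, c, hc, hbc⟩ := Finset.one_lt_card.mp this
  exact ⟨b, c, (Finset.ne_of_mem_erase hb).symm, (Finset.ne_of_mem_erase hc).symm, hbc⟩

def transversalSubspace (ι α : Type*) [Fintype α] : AffineSubspace ℝ (ι → α → ℝ) where
  carrier := {x | ∀ i, ∑ a, x i a = 1}
  smul_vsub_vadd_mem' c p₁ p₂ p₃ h₁ h₂ h₃ i := by
    simp only [vsub_eq_sub, vadd_eq_add, Pi.add_apply, Pi.smul_apply, Pi.sub_apply, smul_eq_mul,
      Finset.sum_add_distrib, ← Finset.mul_sum, Finset.sum_sub_distrib, h₁ i, h₂ i, h₃ i]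
    ring

variable {d n : ℕ}

theorem incVec_mem_transversalSubspace (ξ : Fin n → F2 d) :
    incVec ξ ∈ transversalSubspace (Fin n) (F2 d) := by
  intro i
  simp [incVec]

theorem isCyclicTransversal_single_add_single (i j : Fin n) (ω : F2 d) :
    IsCyclicTransversal (fun _ => Set.univ) (Pi.single i ω + Pi.single j ω) := by
  refine ⟨fun _ => trivial, ?_⟩
  simp [Finset.sum_add_distrib, ZModModule.add_self]

theorem incVec_single_add_single_sub_incVec_zero {i j : Fin n} (hij : i ≠ j) (ω : F2 d) :
    incVec (Pi.single i ω + Pi.single j ω) - incVec 0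
      = (incVec (Pi.single i ω) - incVec 0) + (incVec (Pi.single j ω) - incVec 0) := by
  ext m υ
  by_cases hmi : m = i <;> by_cases hmj : m = j <;> simp_all [incVec]

theorem sub_incVec_zero_eq_sum {x : Fin n → F2 d → ℝ}
    (hx : x ∈ transversalSubspace (Fin n) (F2 d)) :
    x - incVec 0 = ∑ i, ∑ ω, x i ω • (incVec (Pi.single i ω) - incVec 0) := by
  ext m υ
  simp only [Finset.sum_apply, Pi.sub_apply, Pi.smul_apply, smul_eq_mul]
  rw [Finset.sum_eq_single m (fun i _ him => by simp [incVec, Ne.symm him]) (by simp)]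
  simp [incVec, mul_sub, Finset.sum_sub_distrib, hx m]

def cyclicIncVecs (d n : ℕ) : Set (Fin n → F2 d → ℝ) :=
  incVec '' {ξ | IsCyclicTransversal (fun _ : Fin n => (Set.univ : Set (F2 d))) ξ}

theorem incVec_zero_mem_cyclicIncVecs : incVec 0 ∈ cyclicIncVecs d n :=
  ⟨0, ⟨fun _ => trivial, by simp⟩, rfl⟩

theorem incVec_single_sub_incVec_zero_mem_vectorSpan (hn : 3 ≤ n) (i : Fin n) (ω : F2 d) :
    incVec (Pi.single i ω) - incVec 0 ∈ vectorSpan ℝ (cyclicIncVecs d n) := by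
  obtain ⟨j, k, hij, hik, hjk⟩ := exists_ne_ne_of_two_lt_card (by rw [Fintype.card_fin]; omega) i
  have pair_mem {a b : Fin n} (hab : a ≠ b) :
      (incVec (Pi.single a ω) - incVec 0) + (incVec (Pi.single b ω) - incVec 0) ∈
        vectorSpan ℝ (cyclicIncVecs d n) := by
    rw [← incVec_single_add_single_sub_incVec_zero hab]
    exact vsub_mem_vectorSpan ℝ ⟨_, isCyclicTransversal_single_add_single a b ω, rfl⟩
      incVec_zero_mem_cyclicIncVecs
  exact Submodule.mem_of_add_mem_of_add_mem_of_add_mem (pair_mem hij) (pair_mem hik) (pair_mem hjk)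

theorem statement6_general (d n : ℕ) (hn : 3 ≤ n) :
    (affineSpan ℝ (CTP (fun _ : Fin n => (Set.univ : Set (F2 d)))) : Set (Fin n → F2 d → ℝ))
      = { x : Fin n → F2 d → ℝ | ∀ i, (∑ ω : F2 d, x i ω) = 1 } := by
  suffices h : affineSpan ℝ (cyclicIncVecs d n) = transversalSubspace (Fin n) (F2 d) by
    rw [CTP, ← cyclicIncVecs, affineSpan_convexHull, h]
    rfl
  have h0 : incVec 0 ∈ affineSpan ℝ (cyclicIncVecs d n) :=
    mem_affineSpan ℝ incVec_zero_mem_cyclicIncVecs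
  refine le_antisymm (affineSpan_le.mpr ?_) fun x hx => ?_
  · rintro _ ⟨ξ, -, rfl⟩
    exact incVec_mem_transversalSubspace ξ
  · rw [← AffineSubspace.vsub_right_mem_direction_iff_mem h0, direction_affineSpan, vsub_eq_sub,
      sub_incVec_zero_eq_sum hx]
    exact Submodule.sum_mem _ fun i _ => Submodule.sum_mem _ fun ω _ =>
      Submodule.smul_mem _ _ (incVec_single_sub_incVec_zero_mem_vectorSpan hn i ω)

/-- the affine hull of the full CTP is given by the transversal equations. -/
theorem statement6 (d n : ℕ) (hd : 1 ≤ d) (hn : 3 ≤ n) :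
    (affineSpan ℝ (CTP (fun _ : Fin n => (Set.univ : Set (F2 d)))) : Set (Fin n → F2 d → ℝ))
      = { x : Fin n → F2 d → ℝ | ∀ i, (∑ ω : F2 d, x i ω) = 1 } :=
  statement6_general d n hn
end

section
/- For all d ≥ 1 and n ≥ 3, the dimension of the full cyclic transversal polytope CTP[d,n] equals n·(2^d − 1), i.e., the finrank of the direction of the affine span of CTP[d,n] in ℝ^{B(d,n)} is n·(2^d − 1). -/
open scoped Classical

/-!
The affine hull of `CTP[d,n]` lies in the affine subspace where every row `x^i` sums to `1`, whose
direction is the kernel of the row-sum map, of dimension `n·2^d − n`. Conversely, for `i ≠ j` and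
`ω ∈ 𝔽₂^d` the tuple with `ω` in positions `i`, `j` and `0` elsewhere is cyclic, so
`u_i(ω) + u_j(ω)` lies in the direction, where `u_i(ω) = e_{i,ω} − e_{i,0}`. Having three distinct
indices, `2 u_i(ω) = (u_i + u_j) + (u_i + u_k) − (u_j + u_k)`, and the `u_i(ω)` span that kernel.
-/

open Finset

section RowSum

variable {ι κ : Type*} [Fintype κ]

noncomputable def rowSum : (ι → κ → ℝ) →ₗ[ℝ] (ι → ℝ) where
  toFun x i := ∑ ω, x i ω
  map_add' x y := by funext i; simp [sum_add_distrib]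
  map_smul' c x := by funext i; simp [mul_sum]

lemma rowSum_apply (x : ι → κ → ℝ) (i : ι) : rowSum x i = ∑ ω, x i ω := rfl

lemma rowSum_surjective [Nonempty κ] : Function.Surjective (rowSum : (ι → κ → ℝ) → ι → ℝ) := by
  intro c
  obtain ⟨ω₀⟩ := ‹Nonempty κ›
  exact ⟨fun i => Pi.single ω₀ (c i), by funext i; simp [rowSum_apply]⟩

lemma finrank_ker_rowSum [Fintype ι] [Nonempty κ] :
    Module.finrank ℝ (LinearMap.ker (rowSum : (ι → κ → ℝ) →ₗ[ℝ] ι → ℝ))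
      = Fintype.card ι * (Fintype.card κ - 1) := by
  have h := LinearMap.finrank_range_add_finrank_ker (rowSum : (ι → κ → ℝ) →ₗ[ℝ] ι → ℝ)
  rw [LinearMap.range_eq_top.mpr rowSum_surjective, finrank_top, Module.finrank_fintype_fun_eq_card,
    Module.finrank_pi_fintype] at h
  simp only [Module.finrank_fintype_fun_eq_card, sum_const, card_univ, smul_eq_mul] at h
  rw [Nat.mul_sub_one]
  omega

noncomputable def rowDiff [DecidableEq ι] [DecidableEq κ] (ω₀ : κ) (i : ι) (ω : κ) : ι → κ → ℝ :=
  Pi.single i (Pi.single ω 1 - Pi.single ω₀ 1)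

lemma eq_sum_smul_rowDiff [Fintype ι] [DecidableEq ι] [DecidableEq κ] {x : ι → κ → ℝ}
    (hx : x ∈ LinearMap.ker rowSum) (ω₀ : κ) :
    x = ∑ i, ∑ ω, x i ω • rowDiff ω₀ i ω := by
  have hrow : ∀ i, ∑ ω, x i ω = 0 := fun i => congrFun hx i
  funext a b
  simp only [rowDiff, Finset.sum_apply, Pi.smul_apply, Pi.single_apply, Pi.sub_apply, smul_eq_mul,
    ite_apply, Pi.zero_apply]
  simp [mul_sub, mul_ite, sum_sub_distrib, hrow]

end RowSum

section FullConfiguration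

variable {d n : ℕ}

lemma incVec_apply (ξ : Fin n → F2 d) (i : Fin n) : incVec ξ i = Pi.single (ξ i) 1 := by
  funext ω
  simp [incVec, Pi.single_apply, eq_comm]

noncomputable def pairTransversal (i j : Fin n) (ω : F2 d) : Fin n → F2 d :=
  Pi.single i ω + Pi.single j ω

lemma isCyclicTransversal_pairTransversal (i j : Fin n) (ω : F2 d) :
    IsCyclicTransversal (fun _ => Set.univ) (pairTransversal i j ω) :=
  ⟨fun _ => trivial, by
    simp only [pairTransversal, Pi.add_apply, sum_add_distrib, sum_pi_single', mem_univ, if_true]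
    exact funext fun t => CharTwo.add_self_eq_zero (ω t)⟩

lemma incVec_pairTransversal_sub {i j : Fin n} (hij : i ≠ j) (ω : F2 d) :
    incVec (pairTransversal i j ω) - incVec 0 = rowDiff 0 i ω + rowDiff 0 j ω := by
  funext a
  rcases eq_or_ne a i with rfl | hai
  · simp [incVec_apply, pairTransversal, rowDiff, hij.symm]
  · rcases eq_or_ne a j with rfl | haj
    · simp [incVec_apply, pairTransversal, rowDiff, hai]
    · simp [incVec_apply, pairTransversal, rowDiff, hai, haj]

abbrev fullCyclicVertices (d n : ℕ) : Set (Fin n → F2 d → ℝ) :=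
  incVec '' {ξ | IsCyclicTransversal (fun _ : Fin n => (Set.univ : Set (F2 d))) ξ}

lemma vectorSpan_fullCyclicVertices_le_ker_rowSum :
    vectorSpan ℝ (fullCyclicVertices d n)
      ≤ LinearMap.ker (rowSum : (Fin n → F2 d → ℝ) →ₗ[ℝ] _) := by
  rw [vectorSpan_def, Submodule.span_le]
  rintro _ ⟨_, ⟨ξ, -, rfl⟩, _, ⟨ζ, -, rfl⟩, rfl⟩
  funext i
  simp [rowSum_apply, incVec, sum_sub_distrib]

lemma rowDiff_mem_vectorSpan_fullCyclicVertices (hn : 3 ≤ n) (i : Fin n) (ω : F2 d) :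
    rowDiff 0 i ω ∈ vectorSpan ℝ (fullCyclicVertices d n) := by
  set V := vectorSpan ℝ (fullCyclicVertices d n)
  have hpair : ∀ p q : Fin n, p ≠ q → rowDiff 0 p ω + rowDiff 0 q ω ∈ V := fun p q hpq => by
    rw [← incVec_pairTransversal_sub hpq, ← vsub_eq_sub]
    exact vsub_mem_vectorSpan ℝ ⟨_, isCyclicTransversal_pairTransversal p q ω, rfl⟩
      ⟨0, ⟨fun _ => trivial, sum_const_zero⟩, rfl⟩
  obtain ⟨j, k, hij, hik, hjk⟩ : ∃ j k : Fin n, i ≠ j ∧ i ≠ k ∧ j ≠ k := by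
    have : 1 < (univ.erase i).card := by
      rw [card_erase_of_mem (mem_univ i), card_univ, Fintype.card_fin]
      omega
    obtain ⟨j, hj, k, hk, hjk⟩ := one_lt_card.mp this
    exact ⟨j, k, (ne_of_mem_erase hj).symm, (ne_of_mem_erase hk).symm, hjk⟩
  have hsplit : rowDiff 0 i ω = (2⁻¹ : ℝ) • ((rowDiff 0 i ω + rowDiff 0 j ω)
      + (rowDiff 0 i ω + rowDiff 0 k ω) - (rowDiff 0 j ω + rowDiff 0 k ω)) := by module
  rw [hsplit]
  exact V.smul_mem _ (V.sub_mem (V.add_mem (hpair i j hij) (hpair i k hik)) (hpair j k hjk))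

lemma vectorSpan_fullCyclicVertices_eq_ker_rowSum (hn : 3 ≤ n) :
    vectorSpan ℝ (fullCyclicVertices d n)
      = LinearMap.ker (rowSum : (Fin n → F2 d → ℝ) →ₗ[ℝ] _) := by
  refine le_antisymm vectorSpan_fullCyclicVertices_le_ker_rowSum fun x hx => ?_
  rw [eq_sum_smul_rowDiff hx 0]
  exact Submodule.sum_mem _ fun i _ => Submodule.sum_mem _ fun ω _ =>
    Submodule.smul_mem _ _ (rowDiff_mem_vectorSpan_fullCyclicVertices hn i ω)

end FullConfiguration

theorem statement7_general (d n : ℕ) (hn : 3 ≤ n) :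
    Module.finrank ℝ
        (affineSpan ℝ (CTP (fun _ : Fin n => (Set.univ : Set (F2 d))))).direction
      = n * (2 ^ d - 1) := by
  rw [CTP, affineSpan_convexHull, direction_affineSpan,
    vectorSpan_fullCyclicVertices_eq_ker_rowSum hn, finrank_ker_rowSum]
  simp

/-- the dimension of the full CTP equals `n (2^d - 1)`. -/
theorem statement7 (d n : ℕ) (hd : 1 ≤ d) (hn : 3 ≤ n) :
    Module.finrank ℝ
        (affineSpan ℝ (CTP (fun _ : Fin n => (Set.univ : Set (F2 d))))).direction
      = n * (2 ^ d - 1) :=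
  statement7_general d n hn
end

section
/- Let d ≥ 1 and n ≥ 3 with (d,n) ≠ (1,3). Then for every i ∈ [n] and every ω ∈ 𝔽₂^d, the nonnegativity inequality x^i_ω ≥ 0 defines a facet of the full cyclic transversal polytope CTP[d,n]: the set { x ∈ CTP[d,n] : x^i_ω = 0 } has dimension n·(2^d − 1) − 1, one less than the dimension of CTP[d,n]. -/
/-!
The face `{x ∈ CTP[d,n] : x^i_ω = 0}` lies in the affine subspace cut out by the row equations
`∑_α x^j_α = 1` and by `x^i_ω = 0`; these `n + 1` linear forms are independent, so that subspace
has dimension `n (2^d - 1) - 1`. Conversely, the face contains the incidence vectors of all cyclic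
transversals `ξ` with `ξ(i) ≠ ω`, and their differences span the whole direction. That direction
is spanned by the exchange vectors `e^j_a - e^j_b` (with `a, b ≠ ω` when `j = i`), and each of them
is half of `(δ_p + δ_q) + (δ_p + δ_r) - (δ_q + δ_r)` for distinct positions `p = j, q, r`, where
`δ_u + δ_v` is the change caused by adding the same `t` to the entries `u` and `v` of a cyclic
transversal, which keeps it cyclic over `𝔽₂`. The constraint `ξ(i) ≠ ω` survives all four
transversals when `j = i`, when `d ≥ 2` (then `ξ(i)` can avoid both `ω` and `ω - t`), or when
`n ≥ 4` (then `i` stays outside the triangle): this is where `(d, n) ≠ (1, 3)` is needed.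
-/

open scoped Classical

open Finset

lemma exists_notMem_of_card_lt {α : Type*} [Fintype α] {s : Finset α}
    (h : #s < Fintype.card α) : ∃ a, a ∉ s := by
  obtain ⟨a, -, ha⟩ := exists_mem_notMem_of_card_lt_card (t := univ) h
  exact ⟨a, ha⟩

lemma Submodule.mem_of_add_mem_of_add_mem {K E : Type*} [Field K] [CharZero K]
    [AddCommGroup E] [Module K E] {V : Submodule K E} {u v w : E}
    (huv : u + v ∈ V) (huw : u + w ∈ V) (hvw : v + w ∈ V) : u ∈ V := by
  have h2u : (2 : K) • u ∈ V := by
    convert V.sub_mem (V.add_mem huv huw) hvw using 1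
    module
  exact (V.smul_mem_iff two_ne_zero).1 h2u

section RowSums

variable (K : Type*) {ι κ : Type*} [Field K] [Fintype κ] [DecidableEq ι] [DecidableEq κ]

@[simps]
def rowSums : (ι → κ → K) →ₗ[K] ι → K where
  toFun x j := ∑ α, x j α
  map_add' x y := by ext j; simp [sum_add_distrib]
  map_smul' c x := by ext j; simp [mul_sum]

def exchange (j : ι) (a b : κ) : ι → κ → K := Pi.single j (Pi.single a 1 - Pi.single b 1)

def rowSumsAndEval (i : ι) (ω : κ) : (ι → κ → K) →ₗ[K] (ι → K) × K :=
  (rowSums K).prod (LinearMap.proj ω ∘ₗ LinearMap.proj i)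

variable {K}

@[simp]
lemma rowSums_exchange (j : ι) (a b : κ) : rowSums K (exchange K j a b) = 0 := by
  ext l
  by_cases hl : l = j
  · subst hl; simp [exchange, sum_sub_distrib]
  · simp [exchange, hl]

lemma eq_sum_smul_exchange [Fintype ι] {y : ι → κ → K} (hy : rowSums K y = 0)
    (β : ι → κ) :
    y = ∑ j, ∑ α, y j α • exchange K j α (β j) := by
  conv_lhs => rw [← univ_sum_single y]
  refine sum_congr rfl fun j _ => ?_
  have hrow : ∑ α, y j α • (Pi.single α 1 - Pi.single (β j) 1 : κ → K) = y j := by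
    have hsum : ∑ α, y j α = 0 := congrFun hy j
    conv_rhs => rw [pi_eq_sum_univ' (y j)]
    simp only [smul_sub, sum_sub_distrib, ← sum_smul, hsum, zero_smul, sub_zero]
  ext t γ
  by_cases ht : t = j
  · subst ht
    conv_lhs => rw [← hrow]
    simp [exchange, Finset.sum_apply]
  · simp [exchange, Finset.sum_apply, ht]

lemma rowSumsAndEval_surjective [Nontrivial κ] (i : ι) (ω : κ) :
    Function.Surjective (rowSumsAndEval K i ω) := by
  obtain ⟨ρ, hρ⟩ := exists_ne ω
  rintro ⟨c, t⟩
  refine ⟨(fun j => Pi.single ρ (c j)) + t • exchange K i ω ρ, ?_⟩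
  ext j
  · simp [rowSumsAndEval]
  · simp [rowSumsAndEval, exchange, hρ]

lemma finrank_ker_rowSumsAndEval [Fintype ι] [Nontrivial κ] (i : ι) (ω : κ) :
    Module.finrank K (LinearMap.ker (rowSumsAndEval K i ω))
      = Fintype.card ι * Fintype.card κ - (Fintype.card ι + 1) := by
  have h := LinearMap.finrank_range_add_finrank_ker (rowSumsAndEval K i ω)
  rw [LinearMap.range_eq_top.2 (rowSumsAndEval_surjective i ω), finrank_top] at h
  simp only [Module.finrank_prod, Module.finrank_fintype_fun_eq_card, Module.finrank_self,
    Module.finrank_pi_fintype, sum_const, card_univ, smul_eq_mul] at h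
  omega

end RowSums

section CyclicTransversals

variable {d n : ℕ}

lemma card_F2 : Fintype.card (F2 d) = 2 ^ d := by simp

lemma incVec_add_single (ξ : Fin n → F2 d) (p : Fin n) (t : F2 d) :
    incVec (ξ + Pi.single p t) = incVec ξ + exchange ℝ p (ξ p + t) (ξ p) := by
  ext j α
  by_cases hj : j = p
  · subst hj
    by_cases h1 : ξ j + t = α <;> by_cases h2 : ξ j = α <;>
      simp [incVec, exchange, Pi.single_apply, h1, h2]
  · simp [incVec, exchange, hj]

lemma incVec_add_single_add_single_sub {p q : Fin n} (hpq : p ≠ q) (ξ : Fin n → F2 d)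
    (t : F2 d) :
    incVec (ξ + Pi.single p t + Pi.single q t) - incVec ξ
      = exchange ℝ p (ξ p + t) (ξ p) + exchange ℝ q (ξ q + t) (ξ q) := by
  rw [incVec_add_single, incVec_add_single]
  simp [hpq.symm]
  abel

lemma exchange_mem_vectorSpan_of_triangle {S : Set (Fin n → F2 d)} {p q r : Fin n}
    (hpq : p ≠ q) (hpr : p ≠ r) (hqr : q ≠ r)
    {ξ : Fin n → F2 d} {t : F2 d} (hξ : ξ ∈ S)
    (h_pq : ξ + Pi.single p t + Pi.single q t ∈ S)
    (h_pr : ξ + Pi.single p t + Pi.single r t ∈ S)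
    (h_qr : ξ + Pi.single q t + Pi.single r t ∈ S) :
    exchange ℝ p (ξ p + t) (ξ p) ∈ vectorSpan ℝ (incVec '' S) := by
  have move {u v : Fin n} (huv : u ≠ v) (h : ξ + Pi.single u t + Pi.single v t ∈ S) :
      exchange ℝ u (ξ u + t) (ξ u) + exchange ℝ v (ξ v + t) (ξ v)
        ∈ vectorSpan ℝ (incVec '' S) := by
    rw [← incVec_add_single_add_single_sub huv]
    exact vsub_mem_vectorSpan ℝ (Set.mem_image_of_mem _ h) (Set.mem_image_of_mem _ hξ)
  exact Submodule.mem_of_add_mem_of_add_mem (move hpq h_pq) (move hpr h_pr) (move hqr h_qr)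

/-- The cyclic transversals of `B(d,n)` whose incidence vectors lie on the face `x i ω = 0`. -/
def cyclicAvoiding (i : Fin n) (ω : F2 d) : Set (Fin n → F2 d) :=
  {ξ | ∑ j, ξ j = 0 ∧ ξ i ≠ ω}

lemma add_single_add_single_mem_cyclicAvoiding {i : Fin n} {ω : F2 d} {ξ : Fin n → F2 d}
    (hξ : ∑ j, ξ j = 0) {p q : Fin n} {t : F2 d}
    (hi : (ξ + Pi.single p t + Pi.single q t : Fin n → F2 d) i ≠ ω) :
    ξ + Pi.single p t + Pi.single q t ∈ cyclicAvoiding i ω :=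
  ⟨by simp [sum_add_distrib, hξ, ZModModule.add_self], hi⟩

lemma exchange_mem_vectorSpan_cyclicAvoiding_of_triangle {i p q r : Fin n} (hpq : p ≠ q)
    (hpr : p ≠ r) (hqr : q ≠ r) {ω a b : F2 d} {ξ : Fin n → F2 d} (hξ : ∑ j, ξ j = 0)
    (hξp : ξ p = b) (hξi : ξ i ≠ ω)
    (h_pq : (ξ + Pi.single p (a - b) + Pi.single q (a - b) : Fin n → F2 d) i ≠ ω)
    (h_pr : (ξ + Pi.single p (a - b) + Pi.single r (a - b) : Fin n → F2 d) i ≠ ω)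
    (h_qr : (ξ + Pi.single q (a - b) + Pi.single r (a - b) : Fin n → F2 d) i ≠ ω) :
    exchange ℝ p a b ∈ vectorSpan ℝ (incVec '' cyclicAvoiding i ω) := by
  have key := exchange_mem_vectorSpan_of_triangle (S := cyclicAvoiding i ω) hpq hpr hqr
    ⟨hξ, hξi⟩
    (add_single_add_single_mem_cyclicAvoiding hξ h_pq)
    (add_single_add_single_mem_cyclicAvoiding hξ h_pr)
    (add_single_add_single_mem_cyclicAvoiding hξ h_qr)
  rwa [hξp, add_sub_cancel] at key

lemma exchange_self_mem_vectorSpan (hn : 3 ≤ n) {i : Fin n} {ω a b : F2 d} (ha : a ≠ ω)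
    (hb : b ≠ ω) : exchange ℝ i a b ∈ vectorSpan ℝ (incVec '' cyclicAvoiding i ω) := by
  obtain ⟨q, hq⟩ := exists_notMem_of_card_lt (s := {i}) (by simp; omega)
  obtain ⟨r, hr⟩ := exists_notMem_of_card_lt (s := {i, q}) (card_le_two.trans_lt (by simpa))
  simp only [mem_singleton, mem_insert, not_or] at hq hr
  set ξ : Fin n → F2 d := Pi.single i b + Pi.single q b
  have hξi : ξ i = b := by simp [ξ, Ne.symm hq]
  refine exchange_mem_vectorSpan_cyclicAvoiding_of_triangle (Ne.symm hq) (Ne.symm hr.1)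
    (Ne.symm hr.2) (by simp [ξ, sum_add_distrib, ZModModule.add_self]) hξi (hξi ▸ hb)
    ?_ ?_ ?_
  · simpa [ξ, Ne.symm hq] using ha
  · simpa [ξ, Ne.symm hq, Ne.symm hr.1] using ha
  · simpa [ξ, Ne.symm hq, Ne.symm hr.1] using hb

lemma exchange_mem_vectorSpan_of_two_le (hd : 2 ≤ d) (hn : 3 ≤ n) {i j : Fin n} (hji : j ≠ i)
    (ω a b : F2 d) : exchange ℝ j a b ∈ vectorSpan ℝ (incVec '' cyclicAvoiding i ω) := by
  obtain ⟨k, hk⟩ := exists_notMem_of_card_lt (s := {i, j}) (card_le_two.trans_lt (by simpa))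
  have hcard : #{ω, ω - (a - b)} < Fintype.card (F2 d) := by
    rw [card_F2]
    calc #{ω, ω - (a - b)} ≤ 2 := card_le_two
      _ < 2 ^ 2 := by norm_num
      _ ≤ 2 ^ d := Nat.pow_le_pow_right two_pos hd
  obtain ⟨c, hc⟩ := exists_notMem_of_card_lt hcard
  simp only [mem_insert, mem_singleton, not_or] at hk hc
  have hct : c + (a - b) ≠ ω := fun h => hc.2 (eq_sub_of_add_eq h)
  set ξ : Fin n → F2 d := Pi.single j b + Pi.single i c + Pi.single k (b + c)
  have hξi : ξ i = c := by simp [ξ, hji.symm, Ne.symm hk.1]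
  refine exchange_mem_vectorSpan_cyclicAvoiding_of_triangle hji (Ne.symm hk.2) (Ne.symm hk.1)
    (by simp [ξ, sum_add_distrib, ZModModule.add_self]) (by simp [ξ, hji, Ne.symm hk.2])
    (hξi ▸ hc.1) ?_ ?_ ?_
  · simpa [hji.symm, hk.1, hξi] using hct
  · simpa [hji.symm, hk.1, hξi] using hc.1
  · simpa [hk.1, hξi] using hct

lemma exchange_mem_vectorSpan_of_four_le [Nontrivial (F2 d)] (hn : 4 ≤ n) {i j : Fin n}
    (hji : j ≠ i) (ω a b : F2 d) :
    exchange ℝ j a b ∈ vectorSpan ℝ (incVec '' cyclicAvoiding i ω) := by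
  obtain ⟨k, hk⟩ := exists_notMem_of_card_lt (s := {i, j})
    (card_le_two.trans_lt (by simp; omega))
  obtain ⟨l, hl⟩ := exists_notMem_of_card_lt (s := {i, j, k})
    (card_le_three.trans_lt (by simp; omega))
  obtain ⟨c, hc⟩ := exists_ne ω
  simp only [mem_insert, mem_singleton, not_or] at hk hl
  set ξ : Fin n → F2 d := Pi.single j b + Pi.single i c + Pi.single k (b + c)
  have hξi : ξ i = c := by simp [ξ, hji.symm, Ne.symm hk.1]
  refine exchange_mem_vectorSpan_cyclicAvoiding_of_triangle (Ne.symm hk.2) (Ne.symm hl.2.1)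
    (Ne.symm hl.2.2) (by simp [ξ, sum_add_distrib, ZModModule.add_self])
    (by simp [ξ, hji, Ne.symm hk.2]) (hξi ▸ hc) ?_ ?_ ?_
  · simpa [hji.symm, hk.1, hξi] using hc
  · simpa [hji.symm, hl.1, hξi] using hc
  · simpa [hk.1, hl.1, hξi] using hc

lemma nontrivial_F2 (hd : 1 ≤ d) : Nontrivial (F2 d) :=
  have : Nonempty (Fin d) := ⟨⟨0, hd⟩⟩
  inferInstance

lemma exchange_mem_vectorSpan_cyclicAvoiding (hd : 1 ≤ d) (hn : 3 ≤ n)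
    (hdn : ¬(d = 1 ∧ n = 3)) {i j : Fin n} {ω a b : F2 d}
    (hj : j = i → a ≠ ω ∧ b ≠ ω) :
    exchange ℝ j a b ∈ vectorSpan ℝ (incVec '' cyclicAvoiding i ω) := by
  rcases eq_or_ne j i with rfl | hji
  · exact exchange_self_mem_vectorSpan hn (hj rfl).1 (hj rfl).2
  rcases (by omega : 2 ≤ d ∨ 4 ≤ n) with hd2 | hn4
  · exact exchange_mem_vectorSpan_of_two_le hd2 hn hji ω a b
  · have := nontrivial_F2 hd
    exact exchange_mem_vectorSpan_of_four_le hn4 hji ω a b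

lemma ker_rowSumsAndEval_le_vectorSpan (hd : 1 ≤ d) (hn : 3 ≤ n) (hdn : ¬(d = 1 ∧ n = 3))
    (i : Fin n) (ω : F2 d) :
    LinearMap.ker (rowSumsAndEval ℝ i ω) ≤ vectorSpan ℝ (incVec '' cyclicAvoiding i ω) := by
  have := nontrivial_F2 hd
  obtain ⟨ρ, hρ⟩ := exists_ne ω
  intro y hy
  simp only [rowSumsAndEval, LinearMap.ker_prod, Submodule.mem_inf, LinearMap.mem_ker,
    LinearMap.comp_apply, LinearMap.proj_apply] at hy
  rw [eq_sum_smul_exchange hy.1 (fun j => if j = i then ρ else ω)]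
  refine sum_mem fun j _ => sum_mem fun α _ => ?_
  by_cases h : j = i ∧ α = ω
  · obtain ⟨rfl, rfl⟩ := h
    simp [hy.2]
  · refine Submodule.smul_mem _ _ (exchange_mem_vectorSpan_cyclicAvoiding hd hn hdn ?_)
    intro hji
    exact ⟨fun hα => h ⟨hji, hα⟩, by simpa [hji] using hρ⟩

lemma rowSums_eq_one_of_mem_CTP {B : Fin n → Set (F2 d)} {x : Fin n → F2 d → ℝ}
    (hx : x ∈ CTP B) : rowSums ℝ x = 1 := by
  refine convexHull_min ?_ ((convex_singleton 1).linear_preimage (rowSums ℝ)) hx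
  rintro _ ⟨ξ, -, rfl⟩
  ext j
  simp [incVec]

end CyclicTransversals

lemma vectorSpan_le_ker_of_subset_preimage {K V W : Type*} [Ring K] [AddCommGroup V]
    [Module K V] [AddCommGroup W] [Module K W] (f : V →ₗ[K] W) {s : Set V} {c : W}
    (hs : s ⊆ f ⁻¹' {c}) : vectorSpan K s ≤ LinearMap.ker f := by
  rw [vectorSpan_def, Submodule.span_le]
  rintro _ ⟨x, hx, y, hy, rfl⟩
  change f (x - y) = 0
  rw [map_sub, hs hx, hs hy, sub_self]

/-- for `(d, n) ≠ (1, 3)`, each nonnegativity inequality `x^i_ω ≥ 0` defines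
a facet of the full CTP. -/
theorem statement8 (d n : ℕ) (hd : 1 ≤ d) (hn : 3 ≤ n) (hdn : ¬(d = 1 ∧ n = 3))
    (i : Fin n) (ω : F2 d) :
    Module.finrank ℝ
        (affineSpan ℝ
          { x ∈ CTP (fun _ : Fin n => (Set.univ : Set (F2 d))) | x i ω = 0 }).direction
      = n * (2 ^ d - 1) - 1 := by
  have := nontrivial_F2 hd
  set F := { x ∈ CTP (fun _ : Fin n => (Set.univ : Set (F2 d))) | x i ω = 0 }
  have hF : F ⊆ rowSumsAndEval ℝ i ω ⁻¹' {(1, 0)} := fun x hx =>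
    Prod.ext (rowSums_eq_one_of_mem_CTP hx.1) hx.2
  have hvert : incVec '' cyclicAvoiding i ω ⊆ F := by
    rintro _ ⟨ξ, hξ, rfl⟩
    exact ⟨subset_convexHull ℝ _ ⟨ξ, ⟨fun _ => trivial, hξ.1⟩, rfl⟩,
      by simp [incVec, hξ.2]⟩
  have hdir : (affineSpan ℝ F).direction = LinearMap.ker (rowSumsAndEval ℝ i ω) := by
    rw [direction_affineSpan]
    exact le_antisymm (vectorSpan_le_ker_of_subset_preimage _ hF)
      ((ker_rowSumsAndEval_le_vectorSpan hd hn hdn i ω).trans (vectorSpan_mono ℝ hvert))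
  rw [hdir, finrank_ker_rowSumsAndEval, card_F2, Fintype.card_fin, Nat.mul_sub_one,
    Nat.sub_sub]
end
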